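/- arXiv:1202.5837 — 9 statements merged into one kernel-verified Lean document; each statement's English description precedes it below -/
import Mathlib

section
/- Let b ≤ -1 and A, C ∈ ℝ. Define r : ℝ → ℝ by r(x) = C·√(|1+b|/(1-b))·sin(√(1-b)·x) + A·cos(√(1-b)·x) for x > 0, and r(x) = C·sin(√|1+b|·x) + A·cos(√|1+b|·x) for x ≤ 0. Then r is continuously differentiable on ℝ with r(0) = A and r'(0) = C·√|1+b|, r is twice differentiable at every x ≠ 0, and r satisfies the ordinary differential equation -r''(x) = -b·r(x) + r(x)·sgn(x) for every x ≠ 0. -/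
private lemma aux_deriv (a c ω x : ℝ) :
    HasDerivAt (fun y => a * Real.sin (ω*y) + c * Real.cos (ω*y))
      (a*ω*Real.cos (ω*x) - c*ω*Real.sin (ω*x)) x := by
  have h1 : HasDerivAt (fun y : ℝ => ω*y) ω x := by
    simpa using (hasDerivAt_id x).const_mul ω
  have h2 := (Real.hasDerivAt_sin (ω*x)).comp x h1
  have h3 := (Real.hasDerivAt_cos (ω*x)).comp x h1
  exact ((h2.const_mul a).add (h3.const_mul c)).congr_deriv (by ring)

/-- the explicit profile `r` for `b ≤ -1` is `C¹`, has the stated values at `0`,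
is twice differentiable off `0`, and solves `-r'' = -b r + r sgn x` off `0`. -/
theorem stmt_0 (b A C : ℝ) (hb : b ≤ -1) (r : ℝ → ℝ)
    (hr_pos : ∀ x : ℝ, 0 < x →
      r x = C * Real.sqrt (|1 + b| / (1 - b)) * Real.sin (Real.sqrt (1 - b) * x)
            + A * Real.cos (Real.sqrt (1 - b) * x))
    (hr_nonpos : ∀ x : ℝ, x ≤ 0 →
      r x = C * Real.sin (Real.sqrt |1 + b| * x) + A * Real.cos (Real.sqrt |1 + b| * x)) :
    ContDiff ℝ 1 r ∧ r 0 = A ∧ deriv r 0 = C * Real.sqrt |1 + b| ∧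
    (∀ x : ℝ, x ≠ 0 → DifferentiableAt ℝ (deriv r) x) ∧
    (∀ x : ℝ, x ≠ 0 → -(deriv (deriv r) x) = -b * r x + r x * Real.sign x) := by
  set ω := Real.sqrt |1 + b| with hω
  set ν := Real.sqrt (1 - b) with hν
  set K := C * Real.sqrt (|1 + b| / (1 - b)) with hK
  have h1b : 0 < 1 - b := by linarith
  have hνpos : 0 < ν := Real.sqrt_pos.mpr h1b
  have hων : K * ν = C * ω := by
    rw [hK, Real.sqrt_div (abs_nonneg _), mul_assoc, div_mul_cancel₀ _ hνpos.ne']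
  have hω2 : ω * ω = |1 + b| := Real.mul_self_sqrt (abs_nonneg _)
  have hν2 : ν * ν = 1 - b := Real.mul_self_sqrt h1b.le
  have habs : |1 + b| = -(1 + b) := abs_of_nonpos (by linarith)
  set f : ℝ → ℝ := fun y => C * Real.sin (ω*y) + A * Real.cos (ω*y) with hf
  set g : ℝ → ℝ := fun y => K * Real.sin (ν*y) + A * Real.cos (ν*y) with hg
  have hrf : ∀ y ≤ (0:ℝ), r y = f y := fun y hy => hr_nonpos y hy
  have hr0 : r 0 = A := by rw [hr_nonpos 0 le_rfl]; simp
  have hrg : ∀ y, (0:ℝ) ≤ y → r y = g y := by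
    intro y hy
    rcases hy.lt_or_eq with h | h
    · exact hr_pos y h
    · rw [← h, hr0]; simp [hg]
  set h : ℝ → ℝ := fun y => if y ≤ 0 then C*ω*Real.cos (ω*y) - A*ω*Real.sin (ω*y)
      else K*ν*Real.cos (ν*y) - A*ν*Real.sin (ν*y) with hh
  have h0 : h 0 = C * ω := by simp [hh]
  -- HasDerivAt r (h x) x for all x
  have H : ∀ x : ℝ, HasDerivAt r (h x) x := by
    intro x
    rcases lt_trichotomy x 0 with hx | hx | hx
    · have heq : r =ᶠ[nhds x] f :=
        Filter.eventuallyEq_of_mem (Iio_mem_nhds hx) (fun y hy => hrf y (le_of_lt hy))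
      have := (aux_deriv C A ω x).congr_of_eventuallyEq heq
      simpa [hh, hx.le] using this
    · subst hx
      have hIic : HasDerivWithinAt r (C*ω) (Set.Iic 0) 0 := by
        have := ((aux_deriv C A ω 0).hasDerivWithinAt (s := Set.Iic 0)).congr
          (fun y hy => hrf y hy) (hrf 0 le_rfl)
        simpa using this
      have hIci : HasDerivWithinAt r (C*ω) (Set.Ici 0) 0 := by
        have := ((aux_deriv K A ν 0).hasDerivWithinAt (s := Set.Ici 0)).congr
          (fun y hy => hrg y hy) (hrg 0 le_rfl)
        simpa [hων] using this
      have := hIic.union hIci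
      rw [Set.Iic_union_Ici] at this
      rw [h0]
      exact this.hasDerivAt (by simp)
    · have heq : r =ᶠ[nhds x] g :=
        Filter.eventuallyEq_of_mem (Ioi_mem_nhds hx) (fun y hy => hrg y (le_of_lt hy))
      have := (aux_deriv K A ν x).congr_of_eventuallyEq heq
      simpa [hh, not_le.mpr hx] using this
  have hderiv : deriv r = h := funext fun x => (H x).deriv
  have hcont : Continuous h := by
    apply Continuous.if_le (by fun_prop) (by fun_prop) continuous_id continuous_const
    intro y hy
    subst hy
    simp [hων]
  refine ⟨?_, hr0, ?_, ?_, ?_⟩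
  · exact contDiff_one_iff_deriv.mpr ⟨fun x => (H x).differentiableAt, hderiv ▸ hcont⟩
  · rw [hderiv, h0]
  · intro x hx
    rw [hderiv]
    rcases hx.lt_or_gt with hx | hx
    · have heq : h =ᶠ[nhds x] fun y => -(A*ω) * Real.sin (ω*y) + (C*ω) * Real.cos (ω*y) :=
        Filter.eventuallyEq_of_mem (Iio_mem_nhds hx)
          (fun y hy => by simp [hh, (le_of_lt hy : y ≤ (0:ℝ))]; ring)
      exact ((aux_deriv (-(A*ω)) (C*ω) ω x).congr_of_eventuallyEq heq).differentiableAt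
    · have heq : h =ᶠ[nhds x] fun y => -(A*ν) * Real.sin (ν*y) + (K*ν) * Real.cos (ν*y) :=
        Filter.eventuallyEq_of_mem (Ioi_mem_nhds hx)
          (fun y hy => by simp [hh, not_le.mpr (show (0:ℝ) < y from hy)]; ring)
      exact ((aux_deriv (-(A*ν)) (K*ν) ν x).congr_of_eventuallyEq heq).differentiableAt
  · intro x hx
    rw [hderiv]
    rcases hx.lt_or_gt with hx | hx
    · have heq : h =ᶠ[nhds x] fun y => -(A*ω) * Real.sin (ω*y) + (C*ω) * Real.cos (ω*y) :=
        Filter.eventuallyEq_of_mem (Iio_mem_nhds hx)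
          (fun y hy => by simp [hh, (le_of_lt hy : y ≤ (0:ℝ))]; ring)
      have hd := (aux_deriv (-(A*ω)) (C*ω) ω x).congr_of_eventuallyEq heq
      rw [hd.deriv, hrf x hx.le, Real.sign_of_neg hx, hf]
      have : Real.sin (ω*x) * (ω*ω) * C + Real.cos (ω*x) * (ω*ω) * A
          = (-(1+b)) * (C * Real.sin (ω*x) + A * Real.cos (ω*x)) := by
        rw [hω2, habs]; ring
      linear_combination this
    · have heq : h =ᶠ[nhds x] fun y => -(A*ν) * Real.sin (ν*y) + (K*ν) * Real.cos (ν*y) :=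
        Filter.eventuallyEq_of_mem (Ioi_mem_nhds hx)
          (fun y hy => by simp [hh, not_le.mpr (show (0:ℝ) < y from hy)]; ring)
      have hd := (aux_deriv (-(A*ν)) (K*ν) ν x).congr_of_eventuallyEq heq
      rw [hd.deriv, hrg x hx.le, Real.sign_of_pos hx, hg]
      have : Real.sin (ν*x) * (ν*ν) * K + Real.cos (ν*x) * (ν*ν) * A
          = (1-b) * (K * Real.sin (ν*x) + A * Real.cos (ν*x)) := by
        rw [hν2]; ring
      linear_combination this
end

section
/- Let -1 < b < 1 and A ∈ ℝ. Define r : ℝ → ℝ by r(x) = A·√((b+1)/(1-b))·sin(√(1-b)·x) + A·cos(√(1-b)·x) for x > 0, and r(x) = A·e^{√(b+1)·x} for x ≤ 0. Then r is continuously differentiable on ℝ with r(0) = A and r'(0) = A·√(1+b), r is twice differentiable at every x ≠ 0, and r satisfies -r''(x) = -b·r(x) + r(x)·sgn(x) for every x ≠ 0. -/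
/-- the explicit profile `r` for `-1 < b < 1` is `C¹`, has the stated values at `0`,
is twice differentiable off `0`, and solves `-r'' = -b r + r sgn x` off `0`. -/
theorem stmt_1 (b A : ℝ) (hb1 : -1 < b) (hb2 : b < 1) (r : ℝ → ℝ)
    (hr_pos : ∀ x : ℝ, 0 < x →
      r x = A * Real.sqrt ((b + 1) / (1 - b)) * Real.sin (Real.sqrt (1 - b) * x)
            + A * Real.cos (Real.sqrt (1 - b) * x))
    (hr_nonpos : ∀ x : ℝ, x ≤ 0 → r x = A * Real.exp (Real.sqrt (b + 1) * x)) :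
    ContDiff ℝ 1 r ∧ r 0 = A ∧ deriv r 0 = A * Real.sqrt (1 + b) ∧
    (∀ x : ℝ, x ≠ 0 → DifferentiableAt ℝ (deriv r) x) ∧
    (∀ x : ℝ, x ≠ 0 → -(deriv (deriv r) x) = -b * r x + r x * Real.sign x) := by
  set t := Real.sqrt (b + 1) with ht
  set s := Real.sqrt (1 - b) with hs
  set c := A * Real.sqrt ((b + 1) / (1 - b)) with hc
  have hb1' : (0:ℝ) ≤ b + 1 := by linarith
  have hb2' : (0:ℝ) < 1 - b := by linarith
  have htt : t * t = b + 1 := Real.mul_self_sqrt hb1'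
  have hss : s * s = 1 - b := Real.mul_self_sqrt (le_of_lt hb2')
  have key : c * s = A * t := by
    rw [hc, hs, ht, mul_assoc, ← Real.sqrt_mul (div_nonneg hb1' hb2'.le),
      div_mul_cancel₀ _ (ne_of_gt hb2')]
  -- basic derivatives
  have hexp : ∀ x : ℝ, HasDerivAt (fun y => Real.exp (t * y)) (Real.exp (t * x) * t) x := by
    intro x
    simpa [Function.comp_def] using
      (Real.hasDerivAt_exp (t * x)).comp x ((hasDerivAt_id x).const_mul t)
  have hsin : ∀ x : ℝ, HasDerivAt (fun y => Real.sin (s * y)) (Real.cos (s * x) * s) x := by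
    intro x
    simpa [Function.comp_def] using
      (Real.hasDerivAt_sin (s * x)).comp x ((hasDerivAt_id x).const_mul s)
  have hcos : ∀ x : ℝ, HasDerivAt (fun y => Real.cos (s * y)) (-Real.sin (s * x) * s) x := by
    intro x
    simpa [Function.comp_def] using
      (Real.hasDerivAt_cos (s * x)).comp x ((hasDerivAt_id x).const_mul s)
  -- the derivative function
  set g : ℝ → ℝ := fun x => if x ≤ 0 then A * (Real.exp (t * x) * t)
    else c * (Real.cos (s * x) * s) + A * (-Real.sin (s * x) * s) with hg
  have hFm : ∀ x : ℝ, HasDerivAt (fun y => A * Real.exp (t * y))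
      (A * (Real.exp (t * x) * t)) x := fun x => (hexp x).const_mul A
  have hFp : ∀ x : ℝ, HasDerivAt (fun y => c * Real.sin (s * y) + A * Real.cos (s * y))
      (c * (Real.cos (s * x) * s) + A * (-Real.sin (s * x) * s)) x := fun x =>
    ((hsin x).const_mul c).add ((hcos x).const_mul A)
  -- r has derivative g everywhere
  have hder : ∀ x : ℝ, HasDerivAt r (g x) x := by
    intro x
    rcases lt_trichotomy x 0 with hx | hx | hx
    · have heq : r =ᶠ[nhds x] fun y => A * Real.exp (t * y) := by
        filter_upwards [Iio_mem_nhds hx] with y hy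
        exact hr_nonpos y (le_of_lt (hy : y < 0))
      have := (hFm x).congr_of_eventuallyEq heq
      simpa [hg, hx.le] using this
    · subst hx
      have h0 : r 0 = A * Real.exp (t * 0) := hr_nonpos 0 le_rfl
      have hleft : HasDerivWithinAt r (A * (Real.exp (t * 0) * t)) (Set.Iic 0) 0 :=
        ((hFm 0).hasDerivWithinAt).congr (fun y hy => hr_nonpos y hy) h0
      have hright : HasDerivWithinAt r (A * (Real.exp (t * 0) * t)) (Set.Ici 0) 0 := by
        have hval : c * (Real.cos (s * 0) * s) + A * (-Real.sin (s * 0) * s)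
            = A * (Real.exp (t * 0) * t) := by simp [key]
        have h := (hFp 0).hasDerivWithinAt (s := Set.Ici 0)
        rw [hval] at h
        refine h.congr ?_ ?_
        · intro y hy
          rcases eq_or_lt_of_le (Set.mem_Ici.mp hy) with h | h
          · rw [← h, h0]; simp
          · rw [hr_pos y h, hc]
        · rw [h0]; simp
      have h := hleft.union hright
      rw [Set.Iic_union_Ici, hasDerivWithinAt_univ] at h
      simpa [hg] using h
    · have heq : r =ᶠ[nhds x] fun y => c * Real.sin (s * y) + A * Real.cos (s * y) := by
        filter_upwards [Ioi_mem_nhds hx] with y hy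
        rw [hr_pos y (hy : 0 < y), hc]
      have := (hFp x).congr_of_eventuallyEq heq
      simpa [hg, not_le.mpr hx] using this
  have hdiff : Differentiable ℝ r := fun x => (hder x).differentiableAt
  have hderiv : deriv r = g := funext fun x => (hder x).deriv
  have hgcont : Continuous g := by
    rw [hg]
    refine Continuous.if_le ?_ ?_ continuous_id continuous_const ?_
    · fun_prop
    · fun_prop
    · intro x hx
      simp only [hx]
      simp [key]
  have hC1 : ContDiff ℝ 1 r := by
    rw [contDiff_one_iff_deriv]
    exact ⟨hdiff, hderiv ▸ hgcont⟩
  have hr0 : r 0 = A := by simpa using hr_nonpos 0 le_rfl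
  have hd0 : deriv r 0 = A * Real.sqrt (1 + b) := by
    rw [hderiv]
    simp [hg, ht, add_comm b 1]
  -- second derivative off 0
  have hder2 : ∀ x : ℝ, x ≠ 0 → HasDerivAt g
      (if x ≤ 0 then A * (Real.exp (t * x) * t) * t
        else c * (-Real.sin (s * x) * s) * s - A * (Real.cos (s * x) * s) * s) x := by
    intro x hx
    rcases lt_or_gt_of_ne hx with hx | hx
    · rw [if_pos hx.le]
      have heq : g =ᶠ[nhds x] fun y => A * Real.exp (t * y) * t := by
        filter_upwards [Iio_mem_nhds hx] with y hy
        have hy' : y ≤ 0 := le_of_lt (Set.mem_Iio.mp hy)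
        simp [hg, hy', mul_assoc]
      exact (((hexp x).const_mul A).mul_const t).congr_of_eventuallyEq heq
    · rw [if_neg (not_le.mpr hx)]
      have heq : g =ᶠ[nhds x] fun y => c * Real.cos (s * y) * s - A * Real.sin (s * y) * s := by
        filter_upwards [Ioi_mem_nhds hx] with y hy
        have : ¬ y ≤ 0 := not_le.mpr (hy : 0 < y)
        simp only [hg, if_neg this]
        ring
      exact ((((hcos x).const_mul c).mul_const s).sub
        (((hsin x).const_mul A).mul_const s)).congr_of_eventuallyEq heq
  refine ⟨hC1, hr0, hd0, ?_, ?_⟩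
  · intro x hx
    rw [hderiv]
    exact (hder2 x hx).differentiableAt
  · intro x hx
    have hdd := (hder2 x hx).deriv
    rw [hderiv] at *
    rw [hdd]
    rcases lt_or_gt_of_ne hx with hx' | hx'
    · rw [if_pos hx'.le, hr_nonpos x hx'.le, Real.sign_of_neg hx',
        show A * (Real.exp (t * x) * t) * t = (t * t) * (A * Real.exp (t * x)) from by ring, htt]
      ring
    · rw [if_neg (not_le.mpr hx'), hr_pos x hx', Real.sign_of_pos hx',
        show c * (-Real.sin (s * x) * s) * s - A * (Real.cos (s * x) * s) * s
          = -((s * s) * (c * Real.sin (s * x) + A * Real.cos (s * x))) from by ring, hss]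
      ring
end

section
/- Let b ∈ ℝ and let r : ℝ → ℝ be continuously differentiable, twice differentiable away from 0, and satisfy -r''(x) = -b·r(x) + r(x)·sgn(x) for all x ≠ 0. Define u(t,x) = e^{ibt}·r(x) and v(x) = -sgn(x). Then: (i) for every t and every x ≠ 0, i·∂_t u(t,x) + ∂_{xx} u(t,x) = v(x)·u(t,x); and (ii) v is a weak (distributional) solution of the inviscid Burgers equation v_t + (v²)_x = 0, i.e. for every smooth compactly supported test function ψ : (0,∞) × ℝ → ℝ one has ∫₀^∞ ∫_ℝ ( -sgn(x)·∂_t ψ(t,x) + ∂_x ψ(t,x) ) dx dt = 0. -/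
open MeasureTheory

/-- the pair `(e^{ibt} r(x), -sgn x)` solves the weakly coupled
Schrödinger–Burgers system: the Schrödinger equation pointwise off `x = 0`, and the
inviscid Burgers equation in the weak (distributional) sense. -/
theorem stmt_2 (b : ℝ) (r : ℝ → ℝ)
    (hr1 : ContDiff ℝ 1 r)
    (hr2 : ∀ x : ℝ, x ≠ 0 → DifferentiableAt ℝ (deriv r) x)
    (hode : ∀ x : ℝ, x ≠ 0 → -(deriv (deriv r) x) = -b * r x + r x * Real.sign x)
    (u : ℝ → ℝ → ℂ) (hu : ∀ t x : ℝ, u t x = Complex.exp (Complex.I * b * t) * (r x : ℂ))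
    (v : ℝ → ℝ) (hv : ∀ x : ℝ, v x = -Real.sign x) :
    (∀ t x : ℝ, x ≠ 0 →
      Complex.I * deriv (fun s => u s x) t + deriv (deriv (fun y => u t y)) x
        = (v x : ℂ) * u t x) ∧
    (∀ ψ : ℝ × ℝ → ℝ, ContDiff ℝ (⊤ : ℕ∞) ψ → HasCompactSupport ψ →
      tsupport ψ ⊆ Set.Ioi (0 : ℝ) ×ˢ (Set.univ : Set ℝ) →
      (∫ t in Set.Ioi (0 : ℝ), ∫ x : ℝ,
        (-Real.sign x * deriv (fun s => ψ (s, x)) t + deriv (fun y => ψ (t, y)) x)) = 0) := by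
  constructor
  · -- Schrödinger part
    intro t x hx
    have hrd : Differentiable ℝ r := hr1.differentiable one_ne_zero
    set c : ℂ := Complex.exp (Complex.I * b * t) with hc
    -- time derivative
    have h1 : HasDerivAt (fun s : ℝ => Complex.I * b * (s : ℂ)) (Complex.I * b) t := by
      simpa using ((hasDerivAt_id t).ofReal_comp.const_mul (Complex.I * b))
    have hct : HasDerivAt (fun s : ℝ => Complex.exp (Complex.I * b * s))
        (c * (Complex.I * b)) t := h1.cexp
    have e1 : (fun s => u s x) = fun s : ℝ => Complex.exp (Complex.I * b * s) * (r x : ℂ) :=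
      funext fun s => hu s x
    have hdt : deriv (fun s => u s x) t = c * (Complex.I * b) * (r x : ℂ) := by
      rw [e1]; exact (hct.mul_const _).deriv
    -- space derivatives
    have e2 : (fun y => u t y) = fun y : ℝ => c * (r y : ℂ) := funext fun y => hu t y
    have hd1 : deriv (fun y : ℝ => c * (r y : ℂ)) = fun y => c * ((deriv r y : ℝ) : ℂ) := by
      funext y
      exact (((hrd y).hasDerivAt.ofReal_comp).const_mul c).deriv
    have hdxx : deriv (deriv (fun y => u t y)) x = c * ((deriv (deriv r) x : ℝ) : ℂ) := by
      rw [e2, hd1]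
      exact (((hr2 x hx).hasDerivAt.ofReal_comp).const_mul c).deriv
    have hrr : deriv (deriv r) x = b * r x - r x * Real.sign x := by
      have := hode x hx; linarith
    rw [hdt, hdxx, hrr, hu t x, hv x]
    push_cast
    ring_nf
    rw [Complex.I_sq]
    ring
  · -- Burgers part
    intro ψ hψ hψc hsupp
    have hψd : Differentiable ℝ ψ := hψ.differentiable (by simp)
    set Dt : ℝ × ℝ → ℝ := fun p => fderiv ℝ ψ p (1, 0) with hDtdef
    -- identify the time derivative with the fderiv
    have hT : ∀ t x : ℝ, HasDerivAt (fun s => ψ (s, x)) (Dt (t, x)) t := by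
      intro t x
      have h1 : HasDerivAt (fun s : ℝ => (s, x)) ((1 : ℝ), (0 : ℝ)) t :=
        (hasDerivAt_id t).prodMk (hasDerivAt_const t x)
      exact (hψd (t, x)).hasFDerivAt.comp_hasDerivAt t h1
    have hTeq : ∀ t x : ℝ, deriv (fun s => ψ (s, x)) t = Dt (t, x) :=
      fun t x => (hT t x).deriv
    -- sign function facts
    have hsgn_meas : Measurable Real.sign := by
      have : Real.sign = fun r : ℝ => if r < 0 then (-1 : ℝ) else if 0 < r then 1 else 0 := rfl
      rw [this]
      exact Measurable.ite (measurableSet_lt measurable_id measurable_const) measurable_const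
        (Measurable.ite (measurableSet_lt measurable_const measurable_id)
          measurable_const measurable_const)
    have hsgn_bdd : ∀ x : ℝ, ‖-Real.sign x‖ ≤ 1 := by
      intro x
      rcases lt_trichotomy x 0 with h | h | h
      · simp [Real.sign_of_neg h]
      · simp [h, Real.sign_zero]
      · simp [Real.sign_of_pos h]
    -- compact-support slices
    have hslice_x : ∀ t : ℝ, HasCompactSupport (fun y => ψ (t, y)) := by
      intro t
      apply HasCompactSupport.intro (hψc.image continuous_snd)
      intro y hy
      by_contra h
      exact hy ⟨(t, y), subset_tsupport ψ h, rfl⟩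
    have hslice_t : ∀ x : ℝ, HasCompactSupport (fun s => ψ (s, x)) := by
      intro x
      apply HasCompactSupport.intro (hψc.image continuous_fst)
      intro s hs
      by_contra h
      exact hs ⟨(s, x), subset_tsupport ψ h, rfl⟩
    -- the x-integral of the x-derivative vanishes
    have hslice : ∀ t : ℝ, (∫ x : ℝ, deriv (fun y => ψ (t, y)) x) = 0 := by
      intro t
      have hg : ContDiff ℝ 1 (fun y => ψ (t, y)) :=
        (hψ.of_le (mod_cast le_top)).comp (contDiff_const.prodMk contDiff_id)
      have hgc := hslice_x t
      have hderiv_cont : Continuous (deriv (fun y => ψ (t, y))) := hg.continuous_deriv le_rfl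
      have hint : Integrable (deriv (fun y => ψ (t, y))) :=
        hderiv_cont.integrable_of_hasCompactSupport hgc.deriv
      rw [← intervalIntegral.integral_Iic_add_Ioi (b := (0 : ℝ)) hint.integrableOn hint.integrableOn,
        hgc.integral_Ioi_deriv_eq hg 0, hgc.integral_Iic_deriv_eq hg 0]
      ring
    -- the t-integral over (0,∞) of the t-derivative vanishes
    have hTzero : ∀ x : ℝ, (∫ t in Set.Ioi (0 : ℝ), Dt (t, x)) = 0 := by
      intro x
      have hg : ContDiff ℝ 1 (fun s => ψ (s, x)) :=
        (hψ.of_le (mod_cast le_top)).comp (contDiff_id.prodMk contDiff_const)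
      have hgc := hslice_t x
      have hψ0 : ψ (0, x) = 0 := by
        apply image_eq_zero_of_notMem_tsupport
        intro h
        exact lt_irrefl (0 : ℝ) (hsupp h).1
      have h1 : (∫ t in Set.Ioi (0 : ℝ), deriv (fun s => ψ (s, x)) t) = -ψ (0, x) :=
        hgc.integral_Ioi_deriv_eq hg 0
      calc (∫ t in Set.Ioi (0 : ℝ), Dt (t, x))
          = ∫ t in Set.Ioi (0 : ℝ), deriv (fun s => ψ (s, x)) t := by
            refine integral_congr_ae (Filter.Eventually.of_forall fun t => ?_)
            exact (hTeq t x).symm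
        _ = -ψ (0, x) := h1
        _ = 0 := by rw [hψ0, neg_zero]
    -- continuity and integrability of Dt
    have hDtcont : Continuous Dt := (hψ.continuous_fderiv (by simp)).clm_apply continuous_const
    have hDtc : HasCompactSupport Dt := hψc.fderiv_apply ℝ ((1 : ℝ), (0 : ℝ))
    have hDti : Integrable Dt (volume : Measure (ℝ × ℝ)) :=
      hDtcont.integrable_of_hasCompactSupport hDtc
    set F : ℝ × ℝ → ℝ := fun p => -Real.sign p.2 * Dt p with hFdef
    have hFi0 : Integrable F (volume : Measure (ℝ × ℝ)) := by
      apply hDti.bdd_mul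
      · exact ((hsgn_meas.comp measurable_snd).neg).aestronglyMeasurable
      · exact Filter.Eventually.of_forall fun p => hsgn_bdd p.2
    have hFi : Integrable F ((volume.restrict (Set.Ioi (0 : ℝ))).prod volume) := by
      have h2 : (volume.restrict (Set.Ioi (0 : ℝ))).prod volume
          = (volume : Measure (ℝ × ℝ)).restrict (Set.Ioi (0 : ℝ) ×ˢ Set.univ) := by
        rw [Measure.volume_eq_prod, ← Measure.prod_restrict, Measure.restrict_univ]
      rw [h2]
      exact hFi0.restrict
    -- for each t, split the inner integral
    have hinner : ∀ t : ℝ,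
        (∫ x : ℝ, (-Real.sign x * deriv (fun s => ψ (s, x)) t + deriv (fun y => ψ (t, y)) x))
          = ∫ x : ℝ, F (t, x) := by
      intro t
      have hA : Integrable (fun x : ℝ => F (t, x)) := by
        have hcont : Continuous (fun x : ℝ => Dt (t, x)) :=
          hDtcont.comp (Continuous.prodMk_right t)
        have hcs : HasCompactSupport (fun x : ℝ => Dt (t, x)) := by
          apply HasCompactSupport.intro (hDtc.image continuous_snd)
          intro y hy
          by_contra h
          exact hy ⟨(t, y), subset_tsupport Dt h, rfl⟩
        apply (hcont.integrable_of_hasCompactSupport hcs).bdd_mul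
        · exact (hsgn_meas.neg).aestronglyMeasurable
        · exact Filter.Eventually.of_forall hsgn_bdd
      have hB : Integrable (fun x : ℝ => deriv (fun y => ψ (t, y)) x) := by
        have hg : ContDiff ℝ 1 (fun y => ψ (t, y)) :=
          (hψ.of_le (mod_cast le_top)).comp (contDiff_const.prodMk contDiff_id)
        exact (hg.continuous_deriv le_rfl).integrable_of_hasCompactSupport (hslice_x t).deriv
      have he : (fun x : ℝ =>
          -Real.sign x * deriv (fun s => ψ (s, x)) t + deriv (fun y => ψ (t, y)) x)
          = fun x : ℝ => F (t, x) + deriv (fun y => ψ (t, y)) x := by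
        funext x; rw [hTeq]
      rw [he, integral_add hA hB, hslice t, add_zero]
    calc (∫ t in Set.Ioi (0 : ℝ), ∫ x : ℝ,
          (-Real.sign x * deriv (fun s => ψ (s, x)) t + deriv (fun y => ψ (t, y)) x))
        = ∫ t in Set.Ioi (0 : ℝ), ∫ x : ℝ, F (t, x) := by
          refine integral_congr_ae (Filter.Eventually.of_forall fun t => hinner t)
      _ = ∫ x : ℝ, ∫ t in Set.Ioi (0 : ℝ), F (t, x) := integral_integral_swap hFi
      _ = 0 := by
          have : ∀ x : ℝ, (∫ t in Set.Ioi (0 : ℝ), F (t, x)) = 0 := by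
            intro x
            have : (∫ t in Set.Ioi (0 : ℝ), F (t, x))
                = -Real.sign x * ∫ t in Set.Ioi (0 : ℝ), Dt (t, x) := by
              simp only [hFdef]
              exact integral_const_mul _ _
            rw [this, hTzero x, mul_zero]
          simp [this]
end

section
/- Let ε > 0, b ∈ ℝ, and r₀, r₁ ∈ ℝ. There exists a unique function r_ε : ℝ → ℝ that is continuously differentiable on ℝ, twice differentiable at every x ≠ 0, and satisfies r_ε''(x) = b·r_ε(x) - r_ε(x)·sgn(x)·√(ε·r_ε(x)² + 1) - ε·r_ε(x)³ for all x ≠ 0, with r_ε(0) = r₀ and r_ε'(0) = r₁. Moreover both r_ε and r_ε' are bounded on ℝ. -/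
/-- The profile property for the `ε`-dependent travelling-wave ODE:
`r` is `C¹` on `ℝ`, twice differentiable off `0`, solves
`r'' = b r - r sgn x √(ε r² + 1) - ε r³` off `0`, with data `r(0) = r₀`, `r'(0) = r₁`. -/
def IsProfileEps (ε b r₀ r₁ : ℝ) (r : ℝ → ℝ) : Prop :=
  ContDiff ℝ 1 r ∧
  (∀ x : ℝ, x ≠ 0 → DifferentiableAt ℝ (deriv r) x) ∧
  (∀ x : ℝ, x ≠ 0 → deriv (deriv r) x
      = b * r x - r x * Real.sign x * Real.sqrt (ε * (r x) ^ 2 + 1) - ε * (r x) ^ 3) ∧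
  r 0 = r₀ ∧ deriv r 0 = r₁

open Set Filter Real
open scoped NNReal Topology

noncomputable section
namespace Stmt3

def hfun (ε b σ u : ℝ) : ℝ := b * u - σ * (u * Real.sqrt (ε * u ^ 2 + 1)) - ε * u ^ 3

def W (ε b σ u : ℝ) : ℝ :=
  ε * u ^ 4 / 4 - b * u ^ 2 / 2 + σ * Real.sqrt (ε * u ^ 2 + 1) ^ 3 / (3 * ε)

def En (ε b σ : ℝ) (y : ℝ × ℝ) : ℝ := y.2 ^ 2 / 2 + W ε b σ y.1

def Fv (ε b σ : ℝ) (y : ℝ × ℝ) : ℝ × ℝ := (y.2, hfun ε b σ y.1)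

def clamp (M t : ℝ) : ℝ := max (-M) (min M t)

def FvM (ε b σ M : ℝ) (y : ℝ × ℝ) : ℝ × ℝ := (clamp M y.2, hfun ε b σ (clamp M y.1))

variable {ε b σ : ℝ}

lemma base_pos (hε : 0 < ε) (u : ℝ) : 0 < ε * u ^ 2 + 1 := by positivity

lemma sqrt_pos' (hε : 0 < ε) (u : ℝ) : 0 < Real.sqrt (ε * u ^ 2 + 1) :=
  Real.sqrt_pos.mpr (base_pos hε u)

lemma hasDerivAt_inner (u : ℝ) : HasDerivAt (fun u : ℝ => ε * u ^ 2 + 1) (ε * (2 * u)) u := by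
  simpa using ((hasDerivAt_pow 2 u).const_mul ε).add_const 1

lemma hasDerivAt_sqrtTerm (hε : 0 < ε) (u : ℝ) :
    HasDerivAt (fun u : ℝ => Real.sqrt (ε * u ^ 2 + 1))
      (ε * (2 * u) / (2 * Real.sqrt (ε * u ^ 2 + 1))) u :=
  (hasDerivAt_inner u).sqrt (base_pos hε u).ne'

lemma hasDerivAt_W (hε : 0 < ε) (u : ℝ) : HasDerivAt (W ε b σ) (-(hfun ε b σ u)) u := by
  have h1 := ((hasDerivAt_pow 4 u).const_mul ε).div_const 4
  have h2 := ((hasDerivAt_pow 2 u).const_mul b).div_const 2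
  have h3 := (((hasDerivAt_sqrtTerm hε u).pow 3).const_mul σ).div_const (3 * ε)
  have h := (h1.sub h2).add h3
  show HasDerivAt (fun u : ℝ =>
    ε * u ^ 4 / 4 - b * u ^ 2 / 2 + σ * Real.sqrt (ε * u ^ 2 + 1) ^ 3 / (3 * ε))
    (-(hfun ε b σ u)) u
  refine h.congr_deriv ?_
  set s := Real.sqrt (ε * u ^ 2 + 1) with hsdef
  have hs : s ≠ 0 := (sqrt_pos' hε u).ne'
  simp only [hfun]
  field_simp
  ring

lemma sqrtTerm_contDiff (hε : 0 < ε) :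
    ContDiff ℝ 1 (fun u : ℝ => Real.sqrt (ε * u ^ 2 + 1)) := by
  rw [contDiff_iff_contDiffAt]
  intro u
  have hp : ContDiffAt ℝ 1 (fun u : ℝ => ε * u ^ 2 + 1) u :=
    ((contDiff_const.mul (contDiff_id.pow 2)).add contDiff_const).contDiffAt
  exact (Real.contDiffAt_sqrt (base_pos hε u).ne').comp u hp

lemma hfun_contDiff (hε : 0 < ε) : ContDiff ℝ 1 (hfun ε b σ) := by
  show ContDiff ℝ 1 (fun u : ℝ => b * u - σ * (u * Real.sqrt (ε * u ^ 2 + 1)) - ε * u ^ 3)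
  exact ((contDiff_const.mul contDiff_id).sub
    (contDiff_const.mul (contDiff_id.mul (sqrtTerm_contDiff hε)))).sub
    (contDiff_const.mul (contDiff_id.pow 3))

lemma hfun_lipschitzOn (hε : 0 < ε) (M : ℝ) :
    ∃ K : ℝ≥0, LipschitzOnWith K (hfun ε b σ) (Icc (-M) M) := by
  obtain ⟨C, hC⟩ := (isCompact_Icc (a := -M) (b := M)).exists_bound_of_continuousOn
    ((hfun_contDiff (b := b) (σ := σ) hε).continuous_deriv le_rfl).continuousOn
  refine ⟨(⟨max C 0, le_max_right C 0⟩ : ℝ≥0), (convex_Icc (-M) M).lipschitzOnWith_of_nnnorm_hasDerivWithin_le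
    (f' := deriv (hfun ε b σ)) (fun x _ => ?_) (fun x hx => ?_)⟩
  · exact (((hfun_contDiff hε).differentiable one_ne_zero).differentiableAt.hasDerivAt).hasDerivWithinAt
  · change ((‖deriv (hfun ε b σ) x‖₊ : ℝ)) ≤ max C 0; rw [coe_nnnorm]
    exact (hC x hx).trans (le_max_left _ _)

lemma clamp_lipschitz (M : ℝ) : LipschitzWith 1 (clamp M) := by
  apply LipschitzWith.of_dist_le_mul
  intro a c
  rw [Real.dist_eq, Real.dist_eq, NNReal.coe_one, one_mul]
  have e1 : clamp M a = max (min M a) (-M) := by rw [clamp, max_comm]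
  have e2 : clamp M c = max (min M c) (-M) := by rw [clamp, max_comm]
  rw [e1, e2]
  refine (abs_max_sub_max_le_abs _ _ _).trans ?_
  have h2 := abs_min_sub_min_le_max M a M c
  rw [sub_self, abs_zero, max_eq_right (abs_nonneg _)] at h2
  exact h2

lemma clamp_mem {M : ℝ} (hM : 0 ≤ M) (t : ℝ) : clamp M t ∈ Icc (-M) M :=
  ⟨le_max_left _ _, max_le (by linarith) (min_le_left _ _)⟩

lemma clamp_eq {M t : ℝ} (h : |t| ≤ M) : clamp M t = t := by
  obtain ⟨h1, h2⟩ := abs_le.mp h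
  simp [clamp, min_eq_right h2, max_eq_right h1]

lemma FvM_eq {M : ℝ} {y : ℝ × ℝ} (h : ‖y‖ ≤ M) : FvM ε b σ M y = Fv ε b σ y := by
  rw [norm_prod_le_iff] at h
  simp [FvM, Fv, clamp_eq (Real.norm_eq_abs _ ▸ h.1), clamp_eq (Real.norm_eq_abs _ ▸ h.2)]

lemma FvM_lipschitz (hε : 0 < ε) {M : ℝ} (hM : 0 ≤ M) :
    ∃ K : ℝ≥0, LipschitzWith K (FvM ε b σ M) := by
  obtain ⟨K₀, hK₀⟩ := hfun_lipschitzOn (b := b) (σ := σ) hε M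
  have h1 : LipschitzWith 1 (fun y : ℝ × ℝ => clamp M y.2) := by
    simpa [Function.comp_def] using (clamp_lipschitz M).comp LipschitzWith.prod_snd
  have hcl : LipschitzWith 1 (fun y : ℝ × ℝ => clamp M y.1) := by
    simpa [Function.comp_def] using (clamp_lipschitz M).comp LipschitzWith.prod_fst
  have h2 : LipschitzOnWith (K₀ * 1) ((hfun ε b σ) ∘ (fun y : ℝ × ℝ => clamp M y.1)) univ :=
    hK₀.comp (lipschitzOnWith_univ.mpr hcl) (fun y _ => clamp_mem hM _)
  have h2' : LipschitzWith (K₀ * 1) (fun y : ℝ × ℝ => hfun ε b σ (clamp M y.1)) :=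
    lipschitzOnWith_univ.mp h2
  exact ⟨max 1 (K₀ * 1), h1.prodMk h2'⟩

lemma FvM_bound (hε : 0 < ε) {M : ℝ} (hM : 0 ≤ M) :
    ∃ C : ℝ, 0 ≤ C ∧ ∀ y : ℝ × ℝ, ‖FvM ε b σ M y‖ ≤ C := by
  obtain ⟨C₁, hC₁⟩ := (isCompact_Icc (a := -M) (b := M)).exists_bound_of_continuousOn
    ((hfun_contDiff (b := b) (σ := σ) hε).continuous.continuousOn)
  refine ⟨max M (max C₁ 0), le_trans hM (le_max_left _ _), fun y => ?_⟩
  rw [norm_prod_le_iff]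
  constructor
  · have h := clamp_mem hM y.2
    rw [Real.norm_eq_abs]
    exact (abs_le.mpr ⟨h.1, h.2⟩).trans (le_max_left _ _)
  · exact le_trans (hC₁ _ (clamp_mem hM y.1)) (le_trans (le_max_left _ _) (le_max_right _ _))

lemma en_continuous : Continuous (En ε b σ) := by
  unfold En W
  fun_prop

lemma abs_le_one_add_sq (a : ℝ) : |a| ≤ 1 + a ^ 2 := by
  rcases le_or_gt (|a|) 1 with h | h
  · nlinarith [sq_nonneg a]
  · have h2 : |a| ^ 2 = a ^ 2 := by rw [← abs_pow, abs_of_nonneg (by positivity)]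
    have h3 : |a| ≤ |a| ^ 2 := le_self_pow₀ h.le (by norm_num)
    nlinarith

lemma abs_le_one_add_pow4 (a : ℝ) : |a| ≤ 1 + a ^ 4 := by
  rcases le_or_gt (|a|) 1 with h | h
  · nlinarith [sq_nonneg (a ^ 2)]
  · have h2 : |a| ^ 4 = a ^ 4 := by rw [← abs_pow, abs_of_nonneg (by positivity)]
    have h3 : |a| ≤ |a| ^ 4 := le_self_pow₀ h.le (by norm_num)
    nlinarith

lemma en_lower (hε : 0 < ε) (hσ : |σ| ≤ 1) :
    ∃ C : ℝ, 0 ≤ C ∧ ∀ y : ℝ × ℝ,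
      y.2 ^ 2 / 2 + ε * y.1 ^ 4 / 16 ≤ En ε b σ y + C := by
  refine ⟨(4 * (|b| / 2 + 1 / 4) ^ 2 + 1 / 8 + 2 / 3) / ε, by positivity, fun y => ?_⟩
  set u := y.1 with hu
  set s := Real.sqrt (ε * u ^ 2 + 1) with hsdef
  have hs0 : 0 ≤ s := Real.sqrt_nonneg _
  have hs2 : s ^ 2 = ε * u ^ 2 + 1 := Real.sq_sqrt (base_pos hε u).le
  have hcube : s ^ 3 ≤ 3 / 8 * s ^ 4 + 2 := by
    nlinarith [mul_nonneg (sq_nonneg (s - 2)) hs0, sq_nonneg (s - 2), sq_nonneg (3 * s - 2),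
      mul_nonneg (mul_nonneg hs0 hs0) hs0]
  have hσ1 : -1 ≤ σ := (abs_le.mp hσ).1
  have h1 : -s ^ 3 ≤ σ * s ^ 3 := by nlinarith [pow_nonneg hs0 3]
  have hb : b * u ^ 2 ≤ |b| * u ^ 2 := mul_le_mul_of_nonneg_right (le_abs_self b) (sq_nonneg u)
  rw [← sub_nonneg]
  have hX : En ε b σ y + (4 * (|b| / 2 + 1 / 4) ^ 2 + 1 / 8 + 2 / 3) / ε
      - (y.2 ^ 2 / 2 + ε * u ^ 4 / 16)
      = (ε ^ 2 * u ^ 4 / 4 - ε * (b * u ^ 2) / 2 + σ * s ^ 3 / 3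
        + (4 * (|b| / 2 + 1 / 4) ^ 2 + 1 / 8 + 2 / 3) - ε ^ 2 * u ^ 4 / 16) / ε := by
    simp only [En, W, ← hu, ← hsdef]
    field_simp
    ring
  rw [hX]
  apply div_nonneg _ hε.le
  have hs4 : s ^ 4 = (ε * u ^ 2 + 1) ^ 2 := by rw [← hs2]; ring
  nlinarith [sq_nonneg (ε * u ^ 2 - 8 * (|b| / 2 + 1 / 4)), hcube, h1, hb, sq_nonneg u,
    hε.le, abs_nonneg b, hs4]

lemma en_bound (hε : 0 < ε) (hσ : |σ| ≤ 1) (E₀ : ℝ) :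
    ∃ B : ℝ, 0 ≤ B ∧ ∀ y : ℝ × ℝ, En ε b σ y ≤ E₀ → ‖y‖ ≤ B := by
  obtain ⟨C, hC0, hC⟩ := en_lower (b := b) hε hσ
  refine ⟨1 + (2 * |E₀ + C| + 16 * |E₀ + C| / ε), by positivity, fun y hy => ?_⟩
  have h := hC y
  have h1 : y.2 ^ 2 / 2 + ε * y.1 ^ 4 / 16 ≤ E₀ + C := by linarith
  have hE : (0:ℝ) ≤ |E₀ + C| := abs_nonneg _
  have hEle : E₀ + C ≤ |E₀ + C| := le_abs_self _
  have h6 : (0:ℝ) ≤ 16 * |E₀ + C| / ε := by positivity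
  have h7 : (0:ℝ) ≤ ε * y.1 ^ 4 / 16 := by positivity
  rw [norm_prod_le_iff]
  constructor
  · rw [Real.norm_eq_abs]
    have h4 : ε * y.1 ^ 4 ≤ 16 * |E₀ + C| := by nlinarith [sq_nonneg y.2]
    have h5 : y.1 ^ 4 ≤ 16 * |E₀ + C| / ε := by rw [le_div_iff₀ hε]; linarith
    have := abs_le_one_add_pow4 y.1
    linarith
  · rw [Real.norm_eq_abs]
    have h4 : y.2 ^ 2 ≤ 2 * |E₀ + C| := by nlinarith
    have := abs_le_one_add_sq y.2
    linarith

lemma energy_const (hε : 0 < ε) {f : ℝ → ℝ × ℝ} {a c : ℝ}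
    (hf : ContinuousOn f (Icc a c))
    (hf' : ∀ t ∈ Ico a c, HasDerivWithinAt f (Fv ε b σ (f t)) (Ici t) t) :
    ∀ t ∈ Icc a c, En ε b σ (f t) = En ε b σ (f a) := by
  apply constant_of_has_deriv_right_zero (en_continuous.comp_continuousOn hf)
  intro t ht
  have h1 : HasDerivWithinAt (fun t => (f t).1) ((f t).2) (Ici t) t := by
    have := (ContinuousLinearMap.fst ℝ ℝ ℝ).hasFDerivAt.comp_hasDerivWithinAt t (hf' t ht)
    simpa [Fv, Function.comp_def] using this
  have h2 : HasDerivWithinAt (fun t => (f t).2) (hfun ε b σ ((f t).1)) (Ici t) t := by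
    have := (ContinuousLinearMap.snd ℝ ℝ ℝ).hasFDerivAt.comp_hasDerivWithinAt t (hf' t ht)
    simpa [Fv, Function.comp_def] using this
  have h3 : HasDerivWithinAt (fun t => W ε b σ ((f t).1))
      (-(hfun ε b σ ((f t).1)) * (f t).2) (Ici t) t := by
    have := (hasDerivAt_W (b := b) (σ := σ) hε ((f t).1)).comp_hasDerivWithinAt t h1; exact this
  have h4 : HasDerivWithinAt (fun t => ((f t).2) ^ 2 / 2)
      ((2 * (f t).2 ^ 1 * (hfun ε b σ ((f t).1))) / 2) (Ici t) t := (h2.pow 2).div_const 2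
  have h5 := h4.add h3
  have h6 : (2 * (f t).2 ^ 1 * (hfun ε b σ ((f t).1))) / 2
      + -(hfun ε b σ ((f t).1)) * (f t).2 = 0 := by ring
  rw [h6] at h5
  exact h5

lemma picard_seg (hε : 0 < ε) {M : ℝ} (hM : 0 ≤ M) (y₀ : ℝ × ℝ) (n : ℕ) :
    ∃ f : ℝ → ℝ × ℝ, f 0 = y₀ ∧ ∀ t ∈ Icc (0:ℝ) n,
      HasDerivWithinAt f (FvM ε b σ M (f t)) (Icc (0:ℝ) n) t := by
  obtain ⟨K, hK⟩ := FvM_lipschitz (b := b) (σ := σ) hε hM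
  obtain ⟨C, hC0, hC⟩ := FvM_bound (b := b) (σ := σ) hε hM
  have hpl : IsPicardLindelof (fun _ y => FvM ε b σ M y) (tmin := 0) (tmax := n)
      ⟨0, ⟨le_rfl, Nat.cast_nonneg n⟩⟩ y₀ ⟨C * n, by positivity⟩ 0 ⟨C, hC0⟩ K :=
    { lipschitzOnWith := fun t _ => hK.lipschitzOnWith
      continuousOn := fun x _ => continuousOn_const
      norm_le := fun t _ x _ => hC x
      mul_max_le := by
        have h : max ((n:ℝ) - 0) (0 - 0) = n := by
          rw [sub_zero, sub_zero, max_eq_left (Nat.cast_nonneg n)]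
        show C * max ((n:ℝ) - 0) (0 - 0) ≤ C * n - 0
        rw [h, sub_zero] }
  exact hpl.exists_eq_forall_mem_Icc_hasDerivWithinAt₀

theorem halfline (hε : 0 < ε) (hσ : |σ| ≤ 1) (y₀ : ℝ × ℝ) :
    ∃ (f : ℝ → ℝ × ℝ) (B : ℝ), f 0 = y₀ ∧ ContinuousOn f (Ici 0) ∧
      (∀ t ∈ Ici (0:ℝ), HasDerivWithinAt f (Fv ε b σ (f t)) (Ici t) t) ∧
      (∀ t : ℝ, 0 < t → HasDerivAt f (Fv ε b σ (f t)) t) ∧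
      (∀ t ∈ Ici (0:ℝ), ‖f t‖ ≤ B) := by
  obtain ⟨B, hB0, hB⟩ := en_bound (b := b) hε hσ (En ε b σ y₀)
  set M := B + 1 with hMdef
  have hM : 0 ≤ M := by linarith
  have hBM : B ≤ M := by linarith
  obtain ⟨K, hK⟩ := FvM_lipschitz (b := b) (σ := σ) hε hM
  choose fs hfs0 hfs using picard_seg (b := b) (σ := σ) hε hM y₀
  have hcont : ∀ (n : ℕ), ContinuousOn (fs n) (Icc (0:ℝ) n) :=
    fun n t ht => (hfs n t ht).continuousWithinAt
  have hIci : ∀ (n : ℕ) (t : ℝ), 0 ≤ t → t < n →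
      HasDerivWithinAt (fs n) (FvM ε b σ M (fs n t)) (Ici t) t := fun n t h0 hn =>
    (hfs n t ⟨h0, hn.le⟩).mono_of_mem_nhdsWithin (Icc_mem_nhdsGE_of_mem ⟨h0, hn⟩)
  have agree : ∀ (m n : ℕ) (t : ℝ), 0 ≤ t → t ≤ m → t ≤ n → fs m t = fs n t := by
    intro m n t h0 hm hn
    exact ODE_solution_unique (v := fun _ y => FvM ε b σ M y) (K := K) (fun _ => hK)
      ((hcont m).mono (Icc_subset_Icc le_rfl hm))
      (fun s hs => hIci m s hs.1 (lt_of_lt_of_le hs.2 hm))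
      ((hcont n).mono (Icc_subset_Icc le_rfl hn))
      (fun s hs => hIci n s hs.1 (lt_of_lt_of_le hs.2 hn))
      ((hfs0 m).trans (hfs0 n).symm) ⟨h0, le_rfl⟩
  set F : ℝ → ℝ × ℝ := fun t => fs (⌈t⌉₊ + 1) t with hFdef
  have hlt : ∀ t : ℝ, 0 ≤ t → t < ((⌈t⌉₊ + 1 : ℕ) : ℝ) := by
    intro t h0
    push_cast
    exact lt_of_le_of_lt (Nat.le_ceil t) (by linarith)
  have hFeq : ∀ (n : ℕ) (t : ℝ), 0 ≤ t → t ≤ n → F t = fs n t := by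
    intro n t h0 hn
    exact agree _ n t h0 (hlt t h0).le hn
  have hF0 : F 0 = y₀ := hfs0 _
  have hFcont : ContinuousOn F (Ici 0) := by
    intro t ht
    set n := ⌈t⌉₊ + 1 with hn
    have hmem : Icc (0:ℝ) n ∈ 𝓝[Ici 0] t :=
      mem_nhdsWithin.mpr ⟨Iio (n:ℝ), isOpen_Iio, hlt t ht, fun s hs => ⟨hs.2, hs.1.le⟩⟩
    have h2 : ContinuousWithinAt (fs n) (Ici 0) t :=
      (hcont n t ⟨ht, (hlt t ht).le⟩).mono_of_mem_nhdsWithin hmem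
    apply h2.congr_of_eventuallyEq ?_ (hFeq n t ht (hlt t ht).le)
    filter_upwards [hmem] with s hs using hFeq n s hs.1 hs.2
  have hFderivM : ∀ t ∈ Ici (0:ℝ), HasDerivWithinAt F (FvM ε b σ M (F t)) (Ici t) t := by
    intro t ht
    set n := ⌈t⌉₊ + 1 with hn
    have hmem : Icc (0:ℝ) n ∈ 𝓝[Ici t] t := Icc_mem_nhdsGE_of_mem ⟨ht, hlt t ht⟩
    have hev : F =ᶠ[𝓝[Ici t] t] fs n := by
      filter_upwards [hmem] with s hs using hFeq n s hs.1 hs.2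
    have h2 := (hIci n t ht (hlt t ht)).congr_of_eventuallyEq hev (hFeq n t ht (hlt t ht).le)
    rwa [← hFeq n t ht (hlt t ht).le] at h2
  have hFderivAtM : ∀ t : ℝ, 0 < t → HasDerivAt F (FvM ε b σ M (F t)) t := by
    intro t ht
    set n := ⌈t⌉₊ + 1 with hn
    have hmem : Icc (0:ℝ) n ∈ 𝓝 t := Icc_mem_nhds ht (hlt t ht.le)
    have h3 := (hfs n t ⟨ht.le, (hlt t ht.le).le⟩).hasDerivAt hmem
    have hev : F =ᶠ[𝓝 t] fs n := by
      filter_upwards [hmem] with s hs using hFeq n s hs.1 hs.2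
    have h4 := h3.congr_of_eventuallyEq hev
    rwa [← hFeq n t ht.le (hlt t ht.le).le] at h4
  have hy₀B : ‖y₀‖ ≤ B := hB y₀ le_rfl
  have key : ∀ t ∈ Ici (0:ℝ), ‖F t‖ ≤ B := by
    by_contra hcon
    push_neg at hcon
    obtain ⟨t₁, ht₁, hgt⟩ := hcon
    set S := {t : ℝ | 0 ≤ t ∧ B < ‖F t‖} with hS
    have hne : S.Nonempty := ⟨t₁, ht₁, hgt⟩
    have hbdd : BddBelow S := ⟨0, fun s hs => hs.1⟩
    set t₀ := sInf S with ht₀def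
    have ht₀0 : 0 ≤ t₀ := le_csInf hne (fun s hs => hs.1)
    have hpre : ∀ s, 0 ≤ s → s < t₀ → ‖F s‖ ≤ B := by
      intro s h0 hlt'
      by_contra hgt'
      exact absurd (csInf_le hbdd ⟨h0, lt_of_not_ge hgt'⟩) (not_le.mpr hlt')
    have hFt₀ : ‖F t₀‖ ≤ B := by
      rcases eq_or_lt_of_le ht₀0 with heq | hpos
      · rw [← heq, hF0]; exact hy₀B
      · have hc : ContinuousWithinAt F (Iio t₀) t₀ :=
          (hFcont t₀ ht₀0).mono_of_mem_nhdsWithin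
            (mem_nhdsWithin.mpr ⟨Ioi 0, isOpen_Ioi, hpos, fun s hs => mem_Ici.mpr (le_of_lt hs.1)⟩)
        apply le_of_tendsto (hc.norm)
        filter_upwards [self_mem_nhdsWithin,
          mem_nhdsWithin_of_mem_nhds (Ioi_mem_nhds hpos)] with s hs1 hs2
        exact hpre s hs2.le hs1
    have hltM : ‖F t₀‖ < M := lt_of_le_of_lt hFt₀ (by rw [hMdef]; linarith)
    have hcont₀ : ContinuousWithinAt F (Ici t₀) t₀ := (hFcont t₀ ht₀0).mono (Ici_subset_Ici.mpr ht₀0)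
    have hev : {s : ℝ | ‖F s‖ ≤ M} ∈ 𝓝[Ici t₀] t₀ :=
      ((hcont₀.norm).eventually_lt_const hltM).mono (fun s hs => hs.le)
    obtain ⟨u, hu, hsub⟩ := mem_nhdsGE_iff_exists_Icc_subset.mp hev
    have hall : ∀ s ∈ Icc (0:ℝ) u, ‖F s‖ ≤ M := by
      intro s hs
      rcases lt_or_ge s t₀ with h | h
      · exact (hpre s hs.1 h).trans hBM
      · exact hsub ⟨h, hs.2⟩
    have hderiv' : ∀ s ∈ Ico (0:ℝ) u, HasDerivWithinAt F (Fv ε b σ (F s)) (Ici s) s := by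
      intro s hs
      have h := hFderivM s hs.1
      rwa [FvM_eq (hall s ⟨hs.1, hs.2.le⟩)] at h
    have henergy := energy_const hε (hFcont.mono (fun s hs => hs.1)) hderiv'
    have hBall : ∀ s ∈ Icc (0:ℝ) u, ‖F s‖ ≤ B := by
      intro s hs
      exact hB _ (le_of_eq (by rw [henergy s hs, hF0]))
    obtain ⟨s, hsS, hslt⟩ := (csInf_lt_iff hbdd hne).mp (show t₀ < u from hu)
    exact absurd (hBall s ⟨hsS.1, hslt.le⟩) (not_le.mpr hsS.2)
  refine ⟨F, B, hF0, hFcont, fun t ht => ?_, fun t ht => ?_, key⟩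
  · have h := hFderivM t ht
    rwa [FvM_eq ((key t ht).trans hBM)] at h
  · have h := hFderivAtM t ht
    rwa [FvM_eq ((key t ht.le).trans hBM)] at h

lemma fstAt {f : ℝ → ℝ × ℝ} {y : ℝ × ℝ} {t : ℝ} (h : HasDerivAt f y t) :
    HasDerivAt (fun s => (f s).1) y.1 t := by
  simpa [Function.comp_def] using (ContinuousLinearMap.fst ℝ ℝ ℝ).hasFDerivAt.comp_hasDerivAt t h

lemma sndAt {f : ℝ → ℝ × ℝ} {y : ℝ × ℝ} {t : ℝ} (h : HasDerivAt f y t) :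
    HasDerivAt (fun s => (f s).2) y.2 t := by
  simpa [Function.comp_def] using (ContinuousLinearMap.snd ℝ ℝ ℝ).hasFDerivAt.comp_hasDerivAt t h

lemma fstW {f : ℝ → ℝ × ℝ} {y : ℝ × ℝ} {s : Set ℝ} {t : ℝ} (h : HasDerivWithinAt f y s t) :
    HasDerivWithinAt (fun u => (f u).1) y.1 s t := by
  simpa [Function.comp_def] using (ContinuousLinearMap.fst ℝ ℝ ℝ).hasFDerivAt.comp_hasDerivWithinAt t h

lemma hfun_expand (s u : ℝ) :
    hfun ε b s u = b * u - u * s * Real.sqrt (ε * u ^ 2 + 1) - ε * u ^ 3 := by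
  rw [hfun]; ring

theorem profile_exists (hε : 0 < ε) (b r₀ r₁ : ℝ) :
    ∃ r : ℝ → ℝ, (ContDiff ℝ 1 r ∧
      (∀ x : ℝ, x ≠ 0 → DifferentiableAt ℝ (deriv r) x) ∧
      (∀ x : ℝ, x ≠ 0 → deriv (deriv r) x
        = b * r x - r x * Real.sign x * Real.sqrt (ε * (r x) ^ 2 + 1) - ε * (r x) ^ 3) ∧
      r 0 = r₀ ∧ deriv r 0 = r₁) ∧ ∃ M : ℝ, ∀ x : ℝ, |r x| ≤ M ∧ |deriv r x| ≤ M := by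
  obtain ⟨p, Bp, hp0, hpc, hpIci, hpAt, hpB⟩ :=
    halfline (b := b) (σ := 1) hε (by norm_num) (r₀, r₁)
  obtain ⟨q, Bq, hq0, hqc, hqIci, hqAt, hqB⟩ :=
    halfline (b := b) (σ := -1) hε (by norm_num) (r₀, -r₁)
  set r : ℝ → ℝ := fun x => if 0 ≤ x then (p x).1 else (q (-x)).1 with hrdef
  set v : ℝ → ℝ := fun x => if 0 ≤ x then (p x).2 else -((q (-x)).2) with hvdef
  have hrpos : ∀ s : ℝ, 0 ≤ s → r s = (p s).1 := by
    intro s h; simp only [hrdef]; rw [if_pos h]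
  have hrneg : ∀ s : ℝ, ¬ 0 ≤ s → r s = (q (-s)).1 := by
    intro s h; simp only [hrdef]; rw [if_neg h]
  have hvpos : ∀ s : ℝ, 0 ≤ s → v s = (p s).2 := by
    intro s h; simp only [hvdef]; rw [if_pos h]
  have hvneg : ∀ s : ℝ, ¬ 0 ≤ s → v s = -((q (-s)).2) := by
    intro s h; simp only [hvdef]; rw [if_neg h]
  have hr_eqIci : ∀ s ∈ Ici (0:ℝ), r s = (p s).1 := fun s hs => hrpos s (mem_Ici.mp hs)
  have hr_eqIic : ∀ s ∈ Iic (0:ℝ), r s = (q (-s)).1 := by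
    intro s hs
    rcases lt_or_eq_of_le (mem_Iic.mp hs) with hlt | heq
    · exact hrneg s (not_le.mpr hlt)
    · rw [heq, hrpos 0 le_rfl, hp0, neg_zero, hq0]
  have hv_eqIci : ∀ s ∈ Ici (0:ℝ), v s = (p s).2 := fun s hs => hvpos s (mem_Ici.mp hs)
  have hv_eqIic : ∀ s ∈ Iic (0:ℝ), v s = -((q (-s)).2) := by
    intro s hs
    rcases lt_or_eq_of_le (mem_Iic.mp hs) with hlt | heq
    · exact hvneg s (not_le.mpr hlt)
    · rw [heq, hvpos 0 le_rfl, hp0, neg_zero, hq0]; simp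
  -- derivative of r is v
  have hrv : ∀ x : ℝ, HasDerivAt r (v x) x := by
    intro x
    rcases lt_trichotomy x 0 with hx | hx | hx
    · have hAt : HasDerivAt q (Fv ε b (-1) (q (-x))) (-x) := hqAt (-x) (by linarith)
      have hneg : HasDerivAt (fun s : ℝ => -s) (-1) x := (hasDerivAt_id x).neg
      have h2 := (fstAt hAt).comp x hneg
      have h1 : HasDerivAt (fun s : ℝ => (q (-s)).1) (-((q (-x)).2)) x := by
        exact h2.congr_deriv (by simp [Fv])
      have hev : r =ᶠ[𝓝 x] fun s : ℝ => (q (-s)).1 := by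
        filter_upwards [Iio_mem_nhds hx] with s hs
        exact hrneg s (not_le.mpr (mem_Iio.mp hs))
      have h3 := h1.congr_of_eventuallyEq hev
      rw [hvneg x (not_le.mpr hx)]
      exact h3
    · subst hx
      have h1 : HasDerivWithinAt (fun s => (p s).1) ((p 0).2) (Ici 0) 0 :=
        fstW (hpIci 0 self_mem_Ici)
      have hr1 : HasDerivWithinAt r ((p 0).2) (Ici 0) 0 :=
        h1.congr hr_eqIci (hr_eqIci 0 self_mem_Ici)
      have h2 : HasDerivWithinAt (fun s => (q s).1) ((q 0).2) (Ici 0) 0 := by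
        have := fstW (hqIci 0 self_mem_Ici)
        simpa [Fv, Function.comp_def] using this
      have hneg : HasDerivWithinAt (fun s : ℝ => -s) (-1) (Iic 0) 0 :=
        ((hasDerivAt_id (0:ℝ)).neg).hasDerivWithinAt
      have h3 : HasDerivWithinAt (fun s : ℝ => (q (-s)).1) ((q 0).2 * (-1)) (Iic 0) 0 := by
        have hcomp := HasDerivWithinAt.comp (s' := Ici (0:ℝ)) 0
          (by simpa using h2) hneg (fun s hs => by simpa using neg_nonneg.mpr (mem_Iic.mp hs))
        simpa [Function.comp_def] using hcomp
      have hr2 : HasDerivWithinAt r ((q 0).2 * (-1)) (Iic 0) 0 :=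
        h3.congr hr_eqIic (hr_eqIic 0 self_mem_Iic)
      have hval1 : (p 0).2 = r₁ := by rw [hp0]
      have hval2 : (q 0).2 * (-1) = r₁ := by rw [hq0]; simp
      rw [hval1] at hr1
      rw [hval2] at hr2
      have hunion := hr2.union hr1
      rw [Iic_union_Ici, hasDerivWithinAt_univ] at hunion
      rw [hvpos 0 le_rfl, hp0]
      exact hunion
    · have hAt : HasDerivAt p (Fv ε b 1 (p x)) x := hpAt x hx
      have h1 := fstAt hAt
      have hev : r =ᶠ[𝓝 x] fun s : ℝ => (p s).1 := by
        filter_upwards [Ioi_mem_nhds hx] with s hs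
        exact hrpos s (le_of_lt (mem_Ioi.mp hs))
      have h3 := h1.congr_of_eventuallyEq hev
      rw [hvpos x hx.le]
      exact h3
  have hderiv : deriv r = v := funext fun x => (hrv x).deriv
  have hdiff : Differentiable ℝ r := fun x => (hrv x).differentiableAt
  -- derivative of v off zero
  have hv2 : ∀ x : ℝ, x ≠ 0 → HasDerivAt v (hfun ε b (Real.sign x) (r x)) x := by
    intro x hx0
    rcases lt_or_gt_of_ne hx0 with hx | hx
    · have hAt : HasDerivAt q (Fv ε b (-1) (q (-x))) (-x) := hqAt (-x) (by linarith)
      have hneg : HasDerivAt (fun s : ℝ => -s) (-1) x := (hasDerivAt_id x).neg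
      have h2 := ((sndAt hAt).comp x hneg).neg
      have h3 : HasDerivAt (fun s : ℝ => -((q (-s)).2)) (hfun ε b (-1) ((q (-x)).1)) x := by
        exact h2.congr_deriv (by simp [Fv])
      have hev : v =ᶠ[𝓝 x] fun s : ℝ => -((q (-s)).2) := by
        filter_upwards [Iio_mem_nhds hx] with s hs
        exact hvneg s (not_le.mpr (mem_Iio.mp hs))
      have h4 := h3.congr_of_eventuallyEq hev
      rw [Real.sign_of_neg hx, hrneg x (not_le.mpr hx)]
      exact h4
    · have hAt : HasDerivAt p (Fv ε b 1 (p x)) x := hpAt x hx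
      have h1 : HasDerivAt (fun s => (p s).2) (hfun ε b 1 ((p x).1)) x := sndAt hAt
      have hev : v =ᶠ[𝓝 x] fun s : ℝ => (p s).2 := by
        filter_upwards [Ioi_mem_nhds hx] with s hs
        exact hvpos s (le_of_lt (mem_Ioi.mp hs))
      have h4 := h1.congr_of_eventuallyEq hev
      rw [Real.sign_of_pos hx, hrpos x hx.le]
      exact h4
  -- continuity of v
  have hvcont : Continuous v := by
    rw [continuous_iff_continuousAt]
    intro x
    rcases lt_trichotomy x 0 with hx | hx | hx
    · exact (hv2 x hx.ne).continuousAt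
    · subst hx
      have h1 : ContinuousWithinAt (fun s => (p s).2) (Ici 0) 0 :=
        continuous_snd.continuousAt.comp_continuousWithinAt (hpc 0 self_mem_Ici)
      have hR : ContinuousWithinAt v (Ici 0) 0 :=
        h1.congr hv_eqIci (hv_eqIci 0 self_mem_Ici)
      have h0 : ContinuousWithinAt q (Ici 0) ((fun s : ℝ => -s) 0) := by
        rw [show (fun s : ℝ => -s) 0 = 0 by simp]
        exact hqc 0 self_mem_Ici
      have h2 : ContinuousWithinAt (fun s : ℝ => q (-s)) (Iic 0) 0 :=
        ContinuousWithinAt.comp h0 (continuous_neg.continuousWithinAt)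
          (fun s hs => by simpa using neg_nonneg.mpr (mem_Iic.mp hs))
      have h3 : ContinuousWithinAt (fun s : ℝ => -((q (-s)).2)) (Iic 0) 0 :=
        (continuous_snd.continuousAt.comp_continuousWithinAt h2).neg
      have hL : ContinuousWithinAt v (Iic 0) 0 :=
        h3.congr hv_eqIic (hv_eqIic 0 self_mem_Iic)
      have hunion := hL.union hR
      rwa [Iic_union_Ici, continuousWithinAt_univ] at hunion
    · exact (hv2 x hx.ne').continuousAt
  refine ⟨r, ⟨?_, ?_, ?_, ?_, ?_⟩, ?_⟩
  · exact contDiff_one_iff_deriv.mpr ⟨hdiff, by rw [hderiv]; exact hvcont⟩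
  · intro x hx
    rw [hderiv]
    exact (hv2 x hx).differentiableAt
  · intro x hx
    rw [hderiv, (hv2 x hx).deriv, hfun_expand]
  · rw [hrpos 0 le_rfl, hp0]
  · rw [hderiv, hvpos 0 le_rfl, hp0]
  · refine ⟨max Bp Bq, fun x => ?_⟩
    rw [hderiv]
    rcases le_or_gt 0 x with hx | hx
    · have h1 := hpB x (mem_Ici.mpr hx)
      rw [hrpos x hx, hvpos x hx]
      constructor
      · exact le_trans (le_trans (le_of_eq (Real.norm_eq_abs _).symm) (norm_fst_le _))
          (le_trans h1 (le_max_left _ _))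
      · exact le_trans (le_trans (le_of_eq (Real.norm_eq_abs _).symm) (norm_snd_le _))
          (le_trans h1 (le_max_left _ _))
    · have h1 := hqB (-x) (mem_Ici.mpr (by linarith))
      rw [hrneg x (not_le.mpr hx), hvneg x (not_le.mpr hx), abs_neg]
      constructor
      · exact le_trans (le_trans (le_of_eq (Real.norm_eq_abs _).symm) (norm_fst_le _))
          (le_trans h1 (le_max_right _ _))
      · exact le_trans (le_trans (le_of_eq (Real.norm_eq_abs _).symm) (norm_snd_le _))
          (le_trans h1 (le_max_right _ _))

lemma profile_en_const (hε : 0 < ε) {f : ℝ → ℝ × ℝ} (hc : Continuous f)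
    (hd : ∀ t : ℝ, 0 < t → HasDerivAt f (Fv ε b σ (f t)) t) :
    ∀ t : ℝ, 0 ≤ t → En ε b σ (f t) = En ε b σ (f 0) := by
  have hseg : ∀ a t : ℝ, 0 < a → a ≤ t → En ε b σ (f t) = En ε b σ (f a) := by
    intro a t ha hat
    exact energy_const hε hc.continuousOn
      (fun u hu => (hd u (lt_of_lt_of_le ha hu.1)).hasDerivWithinAt) t ⟨hat, le_rfl⟩
  intro t ht
  rcases eq_or_lt_of_le ht with heq | hpos
  · rw [← heq]
  · have h1 : Tendsto (fun a => En ε b σ (f a)) (𝓝[>] (0:ℝ)) (𝓝 (En ε b σ (f 0))) :=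
      ((en_continuous.comp hc).tendsto 0).mono_left nhdsWithin_le_nhds
    have h2 : (fun a => En ε b σ (f a)) =ᶠ[𝓝[>] (0:ℝ)] fun _ => En ε b σ (f t) := by
      filter_upwards [Ioc_mem_nhdsGT_of_mem (Set.mem_Ico.mpr ⟨le_rfl, hpos⟩)] with a ha
      exact (hseg a t ha.1 ha.2).symm
    exact (tendsto_nhds_unique (Filter.Tendsto.congr' h2 h1) tendsto_const_nhds).symm

lemma profile_system (hε : 0 < ε) {b r₀ r₁ : ℝ} {r : ℝ → ℝ} (h : IsProfileEps ε b r₀ r₁ r) :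
    (∀ t : ℝ, 0 < t → HasDerivAt (fun u => (r u, deriv r u)) (Fv ε b 1 (r t, deriv r t)) t) ∧
    (∀ t : ℝ, 0 < t →
      HasDerivAt (fun u => (r (-u), -deriv r (-u))) (Fv ε b (-1) (r (-t), -deriv r (-t))) t) := by
  obtain ⟨hC1, hD, hODE, h0, h1⟩ := h
  have hdiff : Differentiable ℝ r := hC1.differentiable one_ne_zero
  constructor
  · intro t ht
    have ha : HasDerivAt r (deriv r t) t := (hdiff t).hasDerivAt
    have hb' : HasDerivAt (deriv r) (deriv (deriv r) t) t := (hD t (ne_of_gt ht)).hasDerivAt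
    have hval : deriv (deriv r) t = hfun ε b 1 (r t) := by
      rw [hODE t (ne_of_gt ht), hfun_expand, Real.sign_of_pos ht]
    rw [hval] at hb'
    exact ha.prodMk hb'
  · intro t ht
    have hneg : HasDerivAt (fun u : ℝ => -u) (-1) t := (hasDerivAt_id t).neg
    have ha : HasDerivAt (fun u : ℝ => r (-u)) (deriv r (-t) * (-1)) t :=
      ((hdiff (-t)).hasDerivAt).comp t hneg
    have hb' : HasDerivAt (fun u : ℝ => deriv r (-u)) (deriv (deriv r) (-t) * (-1)) t :=
      ((hD (-t) (ne_of_lt (by linarith))).hasDerivAt).comp t hneg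
    have hval : deriv (deriv r) (-t) = hfun ε b (-1) (r (-t)) := by
      rw [hODE (-t) (ne_of_lt (by linarith)), hfun_expand, Real.sign_of_neg (by linarith)]
    have hb2 : HasDerivAt (fun u : ℝ => -(deriv r (-u))) (hfun ε b (-1) (r (-t))) t := by
      have h2 := hb'.neg
      exact h2.congr_deriv (by rw [hval]; ring)
    have ha2 : HasDerivAt (fun u : ℝ => r (-u)) (-(deriv r (-t))) t := by
      convert ha using 1; ring
    exact ha2.prodMk hb2

lemma profile_bound (hε : 0 < ε) {b r₀ r₁ : ℝ} {r : ℝ → ℝ} (h : IsProfileEps ε b r₀ r₁ r) :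
    ∃ M : ℝ, ∀ x : ℝ, |r x| ≤ M ∧ |deriv r x| ≤ M := by
  obtain ⟨hsysR, hsysL⟩ := profile_system hε h
  have hcr : Continuous r := h.1.continuous
  have hcv : Continuous (deriv r) := h.1.continuous_deriv le_rfl
  have hfc : Continuous (fun u => (r u, deriv r u)) := hcr.prodMk hcv
  have hgc : Continuous (fun u => (r (-u), -deriv r (-u))) :=
    (hcr.comp continuous_neg).prodMk (hcv.comp continuous_neg).neg
  have hEf := profile_en_const (b := b) (σ := 1) hε hfc hsysR
  have hEg := profile_en_const (b := b) (σ := -1) hε hgc hsysL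
  obtain ⟨Bf, hBf0, hBf⟩ := en_bound (b := b) (σ := 1) hε (by norm_num)
    (En ε b 1 (r 0, deriv r 0))
  obtain ⟨Bg, hBg0, hBg⟩ := en_bound (b := b) (σ := -1) hε (by norm_num)
    (En ε b (-1) (r (-0), -deriv r (-0)))
  refine ⟨max Bf Bg, fun x => ?_⟩
  rcases le_or_gt 0 x with hx | hx
  · have hb1 : ‖(r x, deriv r x)‖ ≤ Bf := hBf _ (le_of_eq (hEf x hx))
    have h2 : ‖r x‖ ≤ ‖(r x, deriv r x)‖ := norm_fst_le (⟨r x, deriv r x⟩ : ℝ × ℝ)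
    have h3 : ‖deriv r x‖ ≤ ‖(r x, deriv r x)‖ := norm_snd_le (⟨r x, deriv r x⟩ : ℝ × ℝ)
    rw [Real.norm_eq_abs] at h2 h3
    exact ⟨h2.trans (hb1.trans (le_max_left _ _)), h3.trans (hb1.trans (le_max_left _ _))⟩
  · have hb1 : ‖(r (-(-x)), -deriv r (-(-x)))‖ ≤ Bg := hBg _ (le_of_eq (hEg (-x) (by linarith)))
    have h2 : ‖r (-(-x))‖ ≤ ‖(r (-(-x)), -deriv r (-(-x)))‖ :=
      norm_fst_le (⟨r (-(-x)), -deriv r (-(-x))⟩ : ℝ × ℝ)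
    have h3 : ‖-deriv r (-(-x))‖ ≤ ‖(r (-(-x)), -deriv r (-(-x)))‖ :=
      norm_snd_le (⟨r (-(-x)), -deriv r (-(-x))⟩ : ℝ × ℝ)
    rw [neg_neg] at h2 h3 hb1
    rw [Real.norm_eq_abs] at h2
    rw [norm_neg, Real.norm_eq_abs] at h3
    exact ⟨h2.trans (hb1.trans (le_max_right _ _)), h3.trans (hb1.trans (le_max_right _ _))⟩

lemma ode_agree (hε : 0 < ε) {M' : ℝ} (hM0 : 0 ≤ M') {f g : ℝ → ℝ × ℝ}
    (hfc : Continuous f) (hgc : Continuous g)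
    (hfd : ∀ t : ℝ, 0 < t → HasDerivAt f (Fv ε b σ (f t)) t)
    (hgd : ∀ t : ℝ, 0 < t → HasDerivAt g (Fv ε b σ (g t)) t)
    (hfb : ∀ t : ℝ, ‖f t‖ ≤ M') (hgb : ∀ t : ℝ, ‖g t‖ ≤ M')
    (h0 : f 0 = g 0) : ∀ t : ℝ, 0 ≤ t → f t = g t := by
  obtain ⟨K, hK⟩ := FvM_lipschitz (b := b) (σ := σ) hε hM0
  intro t ht
  rcases eq_or_lt_of_le ht with heq | hpos
  · rw [← heq]; exact h0
  · have key : ∀ a, 0 < a → a ≤ t →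
        dist (f t) (g t) ≤ dist (f a) (g a) * Real.exp ((K : ℝ) * (t - a)) := by
      intro a ha hat
      have hfd' : ∀ u ∈ Ico a t, HasDerivWithinAt f (FvM ε b σ M' (f u)) (Ici u) u := by
        intro u hu
        rw [FvM_eq (hfb u)]
        exact (hfd u (lt_of_lt_of_le ha hu.1)).hasDerivWithinAt
      have hgd' : ∀ u ∈ Ico a t, HasDerivWithinAt g (FvM ε b σ M' (g u)) (Ici u) u := by
        intro u hu
        rw [FvM_eq (hgb u)]
        exact (hgd u (lt_of_lt_of_le ha hu.1)).hasDerivWithinAt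
      exact dist_le_of_trajectories_ODE (v := fun _ y => FvM ε b σ M' y) (fun _ => hK)
        hfc.continuousOn hfd' hgc.continuousOn hgd' le_rfl t ⟨hat, le_rfl⟩
    have htend : Tendsto (fun a => dist (f a) (g a) * Real.exp ((K:ℝ) * (t - a)))
        (𝓝[>] (0:ℝ)) (𝓝 (dist (f 0) (g 0) * Real.exp ((K:ℝ) * (t - 0)))) := by
      apply Tendsto.mono_left ?_ nhdsWithin_le_nhds
      exact (((hfc.dist hgc).mul (Real.continuous_exp.comp
        (continuous_const.mul (continuous_const.sub continuous_id)))).tendsto 0)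
    rw [h0, dist_self, zero_mul] at htend
    have hd0 : dist (f t) (g t) ≤ 0 := by
      apply ge_of_tendsto htend
      filter_upwards [Ioc_mem_nhdsGT_of_mem (Set.mem_Ico.mpr ⟨le_rfl, hpos⟩)] with a ha
      exact key a ha.1 ha.2
    exact dist_le_zero.mp hd0

lemma profile_unique (hε : 0 < ε) {b r₀ r₁ : ℝ} {r s : ℝ → ℝ}
    (hr : IsProfileEps ε b r₀ r₁ r) (hs : IsProfileEps ε b r₀ r₁ s) : r = s := by
  obtain ⟨Mr, hMr⟩ := profile_bound hε hr
  obtain ⟨Ms, hMs⟩ := profile_bound hε hs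
  set M' : ℝ := max Mr Ms + 1 with hM'def
  have hMr0 : (0:ℝ) ≤ Mr := le_trans (abs_nonneg _) (hMr 0).1
  have hM0 : 0 ≤ M' := by
    have := le_max_left Mr Ms
    linarith
  have hbr : ∀ x : ℝ, |r x| ≤ M' ∧ |deriv r x| ≤ M' := by
    intro x
    have h1 := hMr x
    have := le_max_left Mr Ms
    exact ⟨by linarith [h1.1], by linarith [h1.2]⟩
  have hbs : ∀ x : ℝ, |s x| ≤ M' ∧ |deriv s x| ≤ M' := by
    intro x
    have h1 := hMs x
    have := le_max_right Mr Ms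
    exact ⟨by linarith [h1.1], by linarith [h1.2]⟩
  obtain ⟨hsysRr, hsysLr⟩ := profile_system hε hr
  obtain ⟨hsysRs, hsysLs⟩ := profile_system hε hs
  have hcr : Continuous r := hr.1.continuous
  have hcvr : Continuous (deriv r) := hr.1.continuous_deriv le_rfl
  have hcs : Continuous s := hs.1.continuous
  have hcvs : Continuous (deriv s) := hs.1.continuous_deriv le_rfl
  have hnorm : ∀ (h : ℝ → ℝ) (hb : ∀ x : ℝ, |h x| ≤ M' ∧ |deriv h x| ≤ M') (x : ℝ),
      ‖(h x, deriv h x)‖ ≤ M' := by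
    intro h hb x
    rw [norm_prod_le_iff, Real.norm_eq_abs, Real.norm_eq_abs]
    exact ⟨(hb x).1, (hb x).2⟩
  have hnormL : ∀ (h : ℝ → ℝ) (hb : ∀ x : ℝ, |h x| ≤ M' ∧ |deriv h x| ≤ M') (x : ℝ),
      ‖(h (-x), -deriv h (-x))‖ ≤ M' := by
    intro h hb x
    rw [norm_prod_le_iff, Real.norm_eq_abs, Real.norm_eq_abs, abs_neg]
    exact ⟨(hb (-x)).1, (hb (-x)).2⟩
  have h0R : ((fun u => (r u, deriv r u)) 0 : ℝ × ℝ) = (fun u => (s u, deriv s u)) 0 := by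
    show (r 0, deriv r 0) = (s 0, deriv s 0)
    rw [hr.2.2.2.1, hr.2.2.2.2, hs.2.2.2.1, hs.2.2.2.2]
  have h0L : ((fun u => (r (-u), -deriv r (-u))) 0 : ℝ × ℝ)
      = (fun u => (s (-u), -deriv s (-u))) 0 := by
    show (r (-0), -deriv r (-0)) = (s (-0), -deriv s (-0))
    rw [neg_zero, hr.2.2.2.1, hr.2.2.2.2, hs.2.2.2.1, hs.2.2.2.2]
  have agreeR := ode_agree (b := b) (σ := 1) hε hM0
    (hcr.prodMk hcvr) (hcs.prodMk hcvs) hsysRr hsysRs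
    (hnorm r hbr) (hnorm s hbs) h0R
  have agreeL := ode_agree (b := b) (σ := -1) hε hM0
    ((hcr.comp continuous_neg).prodMk (hcvr.comp continuous_neg).neg)
    ((hcs.comp continuous_neg).prodMk (hcvs.comp continuous_neg).neg)
    hsysLr hsysLs (hnormL r hbr) (hnormL s hbs) h0L
  funext x
  rcases le_or_gt 0 x with hx | hx
  · exact congrArg Prod.fst (agreeR x hx)
  · have h1 := congrArg Prod.fst (agreeL (-x) (by linarith))
    simpa using h1

end Stmt3
end

/-- existence and uniqueness of the travelling-wave profile `r_ε`, and
boundedness of `r_ε` and `r_ε'`. -/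
theorem stmt_3 (ε b r₀ r₁ : ℝ) (hε : 0 < ε) :
    (∃! r : ℝ → ℝ, IsProfileEps ε b r₀ r₁ r) ∧
    (∀ r : ℝ → ℝ, IsProfileEps ε b r₀ r₁ r →
      ∃ M : ℝ, ∀ x : ℝ, |r x| ≤ M ∧ |deriv r x| ≤ M) := by
  obtain ⟨r, hprof5, hbd⟩ := Stmt3.profile_exists hε b r₀ r₁
  have hprof : IsProfileEps ε b r₀ r₁ r := hprof5
  exact ⟨⟨r, hprof, fun s hs => Stmt3.profile_unique hε hs hprof⟩,
    fun s hs' => Stmt3.profile_bound hε hs'⟩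
end

section
/- Let b ∈ ℝ and r₀, r₁ ∈ ℝ. For ε > 0 let r_ε : ℝ → ℝ be the solution of r_ε''(x) = b·r_ε(x) - r_ε(x)·sgn(x)·√(ε r_ε(x)² + 1) - ε·r_ε(x)³ for x ≠ 0 with r_ε(0) = r₀, r_ε'(0) = r₁, and let r : ℝ → ℝ be the solution of -r''(x) = -b·r(x) + r(x)·sgn(x) for x ≠ 0 with r(0) = r₀, r'(0) = r₁ (both C¹ on ℝ, twice differentiable off 0). Then r_ε → r in C¹_loc(ℝ) as ε → 0⁺: for every compact set K ⊂ ℝ, sup_{x ∈ K} ( |r_ε(x) - r(x)| + |r_ε'(x) - r'(x)| ) → 0 as ε → 0⁺. -/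
open Set Real

lemma sqrt_aux {t : ℝ} (ht : 0 ≤ t) :
    1 ≤ Real.sqrt (t + 1) ∧ Real.sqrt (t + 1) ≤ 1 + t / 2 := by
  have h0 : (0:ℝ) ≤ t + 1 := by linarith
  have hsq : Real.sqrt (t + 1) ^ 2 = t + 1 := Real.sq_sqrt h0
  have hnn : 0 ≤ Real.sqrt (t + 1) := Real.sqrt_nonneg _
  constructor
  · nlinarith
  · nlinarith [sq_nonneg t]

/-- Grönwall-type bootstrap lemma. -/
lemma gron_key {E : Type*} [NormedAddCommGroup E] [NormedSpace ℝ E]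
    (v : ℝ → E) (L δ M : ℝ) (hL : 1 ≤ L) (hδ : 0 < δ) (hM : 0 < M)
    (hv : Continuous v) (hv0 : v 0 = 0)
    (hd : ∀ s, 0 < s → s ≤ M → ‖v s‖ ≤ 1 →
      ∃ d, HasDerivAt v d s ∧ ‖d‖ ≤ L * ‖v s‖ + δ)
    (hsmall : δ * Real.exp (L * M) < 1/2) :
    ∀ x ∈ Set.Icc (0:ℝ) M, ‖v x‖ ≤ δ * Real.exp (L * M) := by
  have hL0 : (0:ℝ) < L := lt_of_lt_of_le one_pos hL
  have hE : (0:ℝ) < Real.exp (L * M) := Real.exp_pos _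
  have key : ∀ t x, 0 < t → t ≤ x → x ≤ M →
      (∀ s, t ≤ s → s < x → ‖v s‖ ≤ 1) →
      ‖v x‖ ≤ (‖v t‖ + δ) * Real.exp (L * M) := by
    intro t x ht htx hxM hone
    have hg := norm_le_gronwallBound_of_norm_deriv_right_le (f := v) (f' := deriv v)
      (δ := ‖v t‖) (K := L) (ε := δ) (a := t) (b := x) (hv.continuousOn)
      (fun s hs => by
        obtain ⟨d, hd1, _⟩ := hd s (lt_of_lt_of_le ht hs.1) (le_of_lt (lt_of_lt_of_le hs.2 hxM))
          (hone s hs.1 hs.2)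
        rw [hd1.deriv]
        exact hd1.hasDerivWithinAt)
      le_rfl
      (fun s hs => by
        obtain ⟨d, hd1, hd2⟩ := hd s (lt_of_lt_of_le ht hs.1) (le_of_lt (lt_of_lt_of_le hs.2 hxM))
          (hone s hs.1 hs.2)
        rw [hd1.deriv]
        exact hd2)
      x ⟨htx, le_rfl⟩
    rw [gronwallBound_of_K_ne_0 (ne_of_gt hL0)] at hg
    have h1 : Real.exp (L * (x - t)) ≤ Real.exp (L * M) := by
      apply Real.exp_le_exp.2
      nlinarith
    have h2 : (0:ℝ) < Real.exp (L * (x - t)) := Real.exp_pos _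
    have h3 : δ / L ≤ δ := by
      rw [div_le_iff₀ hL0]; nlinarith
    have h4 : 0 ≤ ‖v t‖ := norm_nonneg _
    have h5 : 0 < δ / L := div_pos hδ hL0
    calc ‖v x‖ ≤ ‖v t‖ * Real.exp (L * (x - t)) + δ / L * (Real.exp (L * (x - t)) - 1) := hg
      _ ≤ (‖v t‖ + δ) * Real.exp (L * M) := by nlinarith
  have limkey : ∀ x, 0 < x → x ≤ M → (∀ s, 0 < s → s < x → ‖v s‖ ≤ 1) →
      ‖v x‖ ≤ δ * Real.exp (L * M) := by
    intro x hx hxM hone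
    by_contra hcon
    push_neg at hcon
    set c := (‖v x‖ - δ * Real.exp (L * M)) / 2 with hc
    have hc0 : 0 < c := by simp only [hc]; linarith
    -- find small t with ‖v t‖ < c / exp (L*M)
    have hcont : ContinuousAt v 0 := hv.continuousAt
    rw [Metric.continuousAt_iff] at hcont
    obtain ⟨t₀, ht₀, hball⟩ := hcont (c / Real.exp (L * M)) (by positivity)
    set t := min x (t₀ / 2) with htdef
    have ht1 : 0 < t := lt_min hx (by linarith)
    have ht2 : t ≤ x := min_le_left _ _
    have htb : dist t 0 < t₀ := by
      rw [Real.dist_eq, sub_zero, abs_of_pos ht1]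
      calc t ≤ t₀ / 2 := min_le_right _ _
        _ < t₀ := by linarith
    have hvt : ‖v t‖ < c / Real.exp (L * M) := by
      have := hball htb
      rwa [dist_eq_norm, hv0, sub_zero] at this
    have hk := key t x ht1 ht2 hxM (fun s hs hs' => hone s (lt_of_lt_of_le ht1 hs) hs')
    have : ‖v x‖ < (c / Real.exp (L * M) + δ) * Real.exp (L * M) := by
      have h4 : 0 ≤ ‖v t‖ := norm_nonneg _
      nlinarith
    rw [add_mul, div_mul_cancel₀ _ (ne_of_gt hE)] at this
    simp only [hc] at this
    linarith
  by_cases hB : ∃ s, s ∈ Icc (0:ℝ) M ∩ {s | 1/2 ≤ ‖v s‖}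
  · exfalso
    set B : Set ℝ := Icc (0:ℝ) M ∩ {s | 1/2 ≤ ‖v s‖} with hBdef
    have hcl : IsClosed B := isClosed_Icc.inter (isClosed_le continuous_const hv.norm)
    have hbdd : BddBelow B := ⟨0, fun s hs => hs.1.1⟩
    set T := sInf B with hT
    have hTB : T ∈ B := hcl.csInf_mem hB hbdd
    have hT0 : 0 < T := by
      rcases lt_or_eq_of_le hTB.1.1 with h | h
      · exact h
      · exfalso
        have h2 := hTB.2
        simp only [Set.mem_setOf_eq, ← h, hv0, norm_zero] at h2
        linarith
    have hT2 : 1/2 ≤ ‖v T‖ := hTB.2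
    have := limkey T hT0 hTB.1.2 (fun s hs hs' => by
      have hsB : s ∉ B := notMem_of_lt_csInf hs' hbdd
      have : s ∈ Icc (0:ℝ) M := ⟨le_of_lt hs, le_trans (le_of_lt hs') hTB.1.2⟩
      by_contra hcon
      exact hsB ⟨this, by
        simp only [mem_setOf_eq]
        push_neg at hcon
        linarith [hT2]⟩)
    linarith [hT2, this]
  · push_neg at hB
    intro x hx
    rcases lt_or_eq_of_le hx.1 with h | h
    · exact limkey x h hx.2 (fun s hs hs' => by
        have := hB s
        simp only [mem_inter_iff, mem_Icc, mem_setOf_eq, not_and] at this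
        have h2 := this ⟨le_of_lt hs, le_trans (le_of_lt hs') hx.2⟩
        linarith [not_le.mp h2])
    · rw [← h, hv0]
      simp only [norm_zero]
      positivity

/-- convergence `r_ε → r` in `C¹_loc(ℝ)` as `ε → 0⁺`: on every compact set,
`sup_K (|r_ε - r| + |r_ε' - r'|) → 0`. -/
theorem stmt_4 (b r₀ r₁ : ℝ) (R : ℝ → ℝ → ℝ) (r : ℝ → ℝ)
    (hR : ∀ ε : ℝ, 0 < ε →
      ContDiff ℝ 1 (R ε) ∧
      (∀ x : ℝ, x ≠ 0 → DifferentiableAt ℝ (deriv (R ε)) x) ∧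
      (∀ x : ℝ, x ≠ 0 → deriv (deriv (R ε)) x
          = b * R ε x - R ε x * Real.sign x * Real.sqrt (ε * (R ε x) ^ 2 + 1)
            - ε * (R ε x) ^ 3) ∧
      R ε 0 = r₀ ∧ deriv (R ε) 0 = r₁)
    (hr : ContDiff ℝ 1 r ∧
      (∀ x : ℝ, x ≠ 0 → DifferentiableAt ℝ (deriv r) x) ∧
      (∀ x : ℝ, x ≠ 0 → -(deriv (deriv r) x) = -b * r x + r x * Real.sign x) ∧
      r 0 = r₀ ∧ deriv r 0 = r₁) :
    ∀ K : Set ℝ, IsCompact K → ∀ η : ℝ, 0 < η → ∃ ε₀ : ℝ, 0 < ε₀ ∧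
      ∀ ε : ℝ, 0 < ε → ε < ε₀ → ∀ x ∈ K,
        |R ε x - r x| + |deriv (R ε) x - deriv r x| < η := by
  obtain ⟨hr1, hr2, hr3, hr4, hr5⟩ := hr
  intro K hK η hη
  -- enclose K in [-M, M]
  obtain ⟨M0, hM0⟩ := hK.isBounded.subset_closedBall 0
  set M : ℝ := max M0 1 with hMdef
  have hM : (0:ℝ) < M := lt_of_lt_of_le one_pos (le_max_right _ _)
  have hKM : K ⊆ Set.Icc (-M) M := by
    intro x hx
    have := hM0 hx
    rw [Metric.mem_closedBall, Real.dist_eq, sub_zero] at this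
    have h1 := abs_le.1 this
    have h2 : M0 ≤ M := le_max_left _ _
    exact ⟨by linarith [h1.1], by linarith [h1.2]⟩
  -- bound on r
  obtain ⟨C0, hC0⟩ := (isCompact_Icc : IsCompact (Set.Icc (-M) M)).exists_bound_of_continuousOn
    hr1.continuous.continuousOn
  set C : ℝ := max C0 0 with hCdef
  have hCnn : (0:ℝ) ≤ C := le_max_right _ _
  have hC : ∀ s ∈ Set.Icc (-M) M, |r s| ≤ C := by
    intro s hs
    have := hC0 s hs
    rw [Real.norm_eq_abs] at this
    exact le_trans this (le_max_left _ _)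
  set L : ℝ := |b| + 1 with hLdef
  have hL : (1:ℝ) ≤ L := by have := abs_nonneg b; rw [hLdef]; linarith
  have hL0 : (0:ℝ) < L := lt_of_lt_of_le one_pos hL
  set Ex : ℝ := Real.exp (L * M) with hExdef
  have hEx : (0:ℝ) < Ex := Real.exp_pos _
  have hC1 : (0:ℝ) < (C + 1) ^ 3 := by positivity
  refine ⟨min η 1 / (8 * (C + 1) ^ 3 * Ex), by positivity, ?_⟩
  intro ε hε hεlt x hxK
  obtain ⟨hu1, hu2, hu3, hu4, hu5⟩ := hR ε hε
  set u : ℝ → ℝ := R ε with hudef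
  set δ : ℝ := 2 * ε * (C + 1) ^ 3 with hδdef
  have hδ : 0 < δ := by positivity
  have hmin : 0 < min η 1 := lt_min hη one_pos
  have hδE : δ * Ex < min η 1 / 4 := by
    rw [lt_div_iff₀ (by positivity)] at hεlt
    have hid : δ * Ex = ε * (8 * (C + 1) ^ 3 * Ex) / 4 := by rw [hδdef]; ring
    linarith
  have hsmall : δ * Ex < 1 / 2 := by
    have : min η 1 ≤ 1 := min_le_right _ _
    linarith
  -- the difference function
  set v : ℝ → ℝ × ℝ := fun s => (u s - r s, deriv u s - deriv r s) with hvdef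
  have hvc : Continuous v :=
    ((hu1.continuous.sub hr1.continuous).prodMk
      ((hu1.continuous_deriv le_rfl).sub (hr1.continuous_deriv le_rfl)))
  have hv0 : v 0 = 0 := by
    simp only [hvdef, hu4, hr4, hu5, hr5, sub_self]
    rfl
  have hfst : ∀ s, |u s - r s| ≤ ‖v s‖ := fun s => by
    have := norm_fst_le (v s); rwa [Real.norm_eq_abs] at this
  have hsnd : ∀ s, |deriv u s - deriv r s| ≤ ‖v s‖ := fun s => by
    have := norm_snd_le (v s); rwa [Real.norm_eq_abs] at this
  -- the key derivative bound at nonzero points of [-M, M]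
  have hder : ∀ s : ℝ, s ≠ 0 → -M ≤ s → s ≤ M → ‖v s‖ ≤ 1 →
      ∃ d, HasDerivAt v d s ∧ ‖d‖ ≤ L * ‖v s‖ + δ := by
    intro s hs hsm hsM hv1
    have hus : HasDerivAt u (deriv u s) s := (hu1.differentiable one_ne_zero s).hasDerivAt
    have hrs : HasDerivAt r (deriv r s) s := (hr1.differentiable one_ne_zero s).hasDerivAt
    have h1 : HasDerivAt (fun y => u y - r y) (deriv u s - deriv r s) s := hus.sub hrs
    have h2 : HasDerivAt (fun y => deriv u y - deriv r y)
        (deriv (deriv u) s - deriv (deriv r) s) s :=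
      ((hu2 s hs).hasDerivAt).sub ((hr2 s hs).hasDerivAt)
    refine ⟨(deriv u s - deriv r s, deriv (deriv u) s - deriv (deriv r) s), h1.prodMk h2, ?_⟩
    have hODEu := hu3 s hs
    have hODEr : deriv (deriv r) s = b * r s - r s * Real.sign s := by
      have := hr3 s hs; linarith
    have hsgn : |Real.sign s| ≤ 1 := by
      rcases lt_trichotomy s 0 with h | h | h
      · rw [Real.sign_of_neg h]; norm_num
      · rw [h, Real.sign_zero]; norm_num
      · rw [Real.sign_of_pos h]; norm_num
    set q : ℝ := Real.sqrt (ε * u s ^ 2 + 1) with hqdef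
    have hq0 : 0 ≤ ε * u s ^ 2 + 1 := by positivity
    have hqsq : q ^ 2 = ε * u s ^ 2 + 1 := Real.sq_sqrt hq0
    have hqnn : 0 ≤ q := Real.sqrt_nonneg _
    have hε2 : 0 ≤ ε * u s ^ 2 := mul_nonneg hε.le (sq_nonneg _)
    obtain ⟨hq1, hq2⟩ := sqrt_aux hε2
    rw [← hqdef] at hq1 hq2
    have hrb : |r s| ≤ C := hC s ⟨hsm, hsM⟩
    have hwb : |u s - r s| ≤ 1 := le_trans (hfst s) hv1
    have hub : |u s| ≤ C + 1 := by
      have := abs_add_le (u s - r s) (r s)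
      simp only [sub_add_cancel] at this
      linarith
    have hub' := abs_le.1 hub
    have hw2 : deriv (deriv u) s - deriv (deriv r) s
        = b * (u s - r s) - Real.sign s * (u s - r s)
          - Real.sign s * u s * (q - 1) - ε * u s ^ 3 := by
      rw [hODEu, hODEr]; ring
    have husq : u s ^ 2 ≤ (C + 1) ^ 2 := sq_le_sq' hub'.1 hub'.2
    have habs2 : |deriv (deriv u) s - deriv (deriv r) s| ≤ L * ‖v s‖ + δ := by
      rw [hw2]
      have t1 : |b * (u s - r s)| ≤ |b| * ‖v s‖ := by
        rw [abs_mul]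
        exact mul_le_mul_of_nonneg_left (hfst s) (abs_nonneg b)
      have t2 : |Real.sign s * (u s - r s)| ≤ 1 * ‖v s‖ := by
        rw [abs_mul]
        exact mul_le_mul hsgn (hfst s) (abs_nonneg _) one_pos.le
      have t3 : |Real.sign s * u s * (q - 1)| ≤ (C + 1) * (ε * (C + 1) ^ 2 / 2) := by
        rw [abs_mul, abs_mul]
        have hq3 : |q - 1| ≤ ε * (C + 1) ^ 2 / 2 := by
          rw [abs_of_nonneg (by linarith)]
          have := mul_le_mul_of_nonneg_left husq hε.le
          linarith
        have h5 : |Real.sign s| * |u s| ≤ 1 * (C + 1) :=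
          mul_le_mul hsgn hub (abs_nonneg _) one_pos.le
        calc |Real.sign s| * |u s| * |q - 1|
            ≤ 1 * (C + 1) * (ε * (C + 1) ^ 2 / 2) :=
              mul_le_mul h5 hq3 (abs_nonneg _) (by positivity)
          _ = (C + 1) * (ε * (C + 1) ^ 2 / 2) := by ring
      have t4 : |ε * u s ^ 3| ≤ ε * (C + 1) ^ 3 := by
        rw [abs_mul, abs_of_pos hε]
        have : |u s ^ 3| = |u s| ^ 3 := by rw [abs_pow]
        rw [this]
        have h6 : |u s| ^ 3 ≤ (C + 1) ^ 3 := pow_le_pow_left₀ (abs_nonneg _) hub 3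
        exact mul_le_mul_of_nonneg_left h6 hε.le
      have tri : |b * (u s - r s) - Real.sign s * (u s - r s)
            - Real.sign s * u s * (q - 1) - ε * u s ^ 3|
          ≤ |b * (u s - r s)| + |Real.sign s * (u s - r s)|
            + |Real.sign s * u s * (q - 1)| + |ε * u s ^ 3| := by
        calc |b * (u s - r s) - Real.sign s * (u s - r s)
              - Real.sign s * u s * (q - 1) - ε * u s ^ 3|
            ≤ |b * (u s - r s) - Real.sign s * (u s - r s)
              - Real.sign s * u s * (q - 1)| + |ε * u s ^ 3| := abs_sub _ _
          _ ≤ |b * (u s - r s) - Real.sign s * (u s - r s)|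
              + |Real.sign s * u s * (q - 1)| + |ε * u s ^ 3| := by
                linarith [abs_sub (b * (u s - r s) - Real.sign s * (u s - r s))
                  (Real.sign s * u s * (q - 1))]
          _ ≤ |b * (u s - r s)| + |Real.sign s * (u s - r s)|
              + |Real.sign s * u s * (q - 1)| + |ε * u s ^ 3| := by
                linarith [abs_sub (b * (u s - r s)) (Real.sign s * (u s - r s))]
      have hLv : L * ‖v s‖ = |b| * ‖v s‖ + 1 * ‖v s‖ := by rw [hLdef]; ring
      have hδ' : (C + 1) * (ε * (C + 1) ^ 2 / 2) + ε * (C + 1) ^ 3 ≤ δ := by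
        rw [hδdef]
        have h7 : 0 ≤ ε * (C + 1) ^ 3 := mul_nonneg hε.le hC1.le
        have hid : (C + 1) * (ε * (C + 1) ^ 2 / 2) = ε * (C + 1) ^ 3 / 2 := by ring
        linarith
      linarith
    rw [Prod.norm_def]
    apply max_le
    · rw [Real.norm_eq_abs]
      have h8 : 0 ≤ (L - 1) * ‖v s‖ := mul_nonneg (by linarith) (norm_nonneg _)
      have : ‖v s‖ ≤ L * ‖v s‖ + δ := by linarith
      linarith [hsnd s]
    · rw [Real.norm_eq_abs]; exact habs2
  -- apply the Grönwall lemma on both sides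
  have hpos := gron_key v L δ M hL hδ hM hvc hv0
    (fun s hs hsM h1 => hder s (ne_of_gt hs) (by linarith) hsM h1) hsmall
  set vn : ℝ → ℝ × ℝ := fun s => v (-s) with hvndef
  have hneg := gron_key vn L δ M hL hδ hM (hvc.comp continuous_neg)
    (by simp only [hvndef, neg_zero, hv0])
    (fun s hs hsM h1 => by
      obtain ⟨d, hdd, hb⟩ := hder (-s) (by simp only [ne_eq, neg_eq_zero]; exact ne_of_gt hs)
        (by linarith) (by linarith) h1
      refine ⟨-d, ?_, by rw [norm_neg]; exact hb⟩
      have := hdd.scomp s (hasDerivAt_neg s)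
      simpa [hvndef, Function.comp_def] using this) hsmall
  have hxI := hKM hxK
  have hbound : ‖v x‖ ≤ δ * Ex := by
    rcases le_or_gt 0 x with h | h
    · exact hpos x ⟨h, hxI.2⟩
    · have := hneg (-x) ⟨by linarith, by linarith [hxI.1]⟩
      simpa only [hvndef, neg_neg] using this
  have h1 := hfst x
  have h2 := hsnd x
  have hmη : min η 1 ≤ η := min_le_left _ _
  calc |R ε x - r x| + |deriv (R ε) x - deriv r x|
      = |u x - r x| + |deriv u x - deriv r x| := by rw [hudef]
    _ ≤ 2 * ‖v x‖ := by linarith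
    _ ≤ 2 * (δ * Ex) := by linarith
    _ < η := by linarith
end

section
/- Let ε > 0, b ∈ ℝ, and let r_ε : ℝ → ℝ be continuously differentiable, twice differentiable off 0, bounded, and satisfy r_ε''(x) = b·r_ε(x) - r_ε(x)·sgn(x)·√(ε r_ε(x)² + 1) - ε·r_ε(x)³ for x ≠ 0. Define u(t,x) = e^{ibt}·r_ε(x) and φ_ε(x) = -sgn(x)·√(ε r_ε(x)² + 1). Then: (i) for every t and every x ≠ 0, i·∂_t u + ∂_{xx} u = φ_ε·u - ε·|u|²·u; and (ii) φ_ε is a weak solution of v_t + (v²)_x = ε(|u|²)_x, i.e. for every smooth compactly supported ψ : (0,∞) × ℝ → ℝ one has ∫₀^∞ ∫_ℝ ( φ_ε(x)·∂_t ψ(t,x) + (φ_ε(x)² - ε·r_ε(x)²)·∂_x ψ(t,x) ) dx dt = 0. -/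
open MeasureTheory

lemma measurable_realSign : Measurable Real.sign := by
  unfold Real.sign
  refine Measurable.ite ?_ measurable_const (Measurable.ite ?_ measurable_const measurable_const)
  · exact measurableSet_Iio (a := (0:ℝ))
  · exact measurableSet_Ioi (a := (0:ℝ))


/-- the pair `(e^{ibt} r_ε(x), φ_ε(x))` with
`φ_ε(x) = -sgn(x) √(ε r_ε(x)² + 1)` solves the nonlinear Schrödinger–inviscid Burgers
system: the cubic Schrödinger equation pointwise off `x = 0`, and the forced Burgers
equation in the weak sense. -/
theorem stmt_5 (ε b : ℝ) (hε : 0 < ε) (r : ℝ → ℝ)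
    (hr1 : ContDiff ℝ 1 r)
    (hrbd : ∃ M : ℝ, ∀ x : ℝ, |r x| ≤ M)
    (hr2 : ∀ x : ℝ, x ≠ 0 → DifferentiableAt ℝ (deriv r) x)
    (hode : ∀ x : ℝ, x ≠ 0 → deriv (deriv r) x
        = b * r x - r x * Real.sign x * Real.sqrt (ε * (r x) ^ 2 + 1) - ε * (r x) ^ 3)
    (u : ℝ → ℝ → ℂ) (hu : ∀ t x : ℝ, u t x = Complex.exp (Complex.I * b * t) * (r x : ℂ))
    (φ : ℝ → ℝ) (hφ : ∀ x : ℝ, φ x = -Real.sign x * Real.sqrt (ε * (r x) ^ 2 + 1)) :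
    (∀ t x : ℝ, x ≠ 0 →
      Complex.I * deriv (fun s => u s x) t + deriv (deriv (fun y => u t y)) x
        = (φ x : ℂ) * u t x - ((ε * ‖u t x‖ ^ 2 : ℝ) : ℂ) * u t x) ∧
    (∀ ψ : ℝ × ℝ → ℝ, ContDiff ℝ (⊤ : ℕ∞) ψ → HasCompactSupport ψ →
      tsupport ψ ⊆ Set.Ioi (0 : ℝ) ×ˢ (Set.univ : Set ℝ) →
      (∫ t in Set.Ioi (0 : ℝ), ∫ x : ℝ,
        (φ x * deriv (fun s => ψ (s, x)) t
          + (φ x ^ 2 - ε * (r x) ^ 2) * deriv (fun y => ψ (t, y)) x)) = 0) := by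
  constructor
  · intro t x hx
    set c : ℂ := Complex.exp (Complex.I * b * t) with hc
    have hrd : Differentiable ℝ r := hr1.differentiable one_ne_zero
    have h1 : HasDerivAt (fun s : ℝ => u s x) (c * (Complex.I * b) * (r x : ℂ)) t := by
      have hbase : HasDerivAt (fun s : ℝ => Complex.I * (b:ℂ) * (s:ℂ)) (Complex.I * b) t := by
        simpa using ((hasDerivAt_id t).ofReal_comp).const_mul (Complex.I * (b:ℂ))
      have := (hbase.cexp).mul_const ((r x : ℂ))
      simp only [hu]
      exact this
    have hinner : deriv (fun y => u t y) = fun y => c * ((deriv r y : ℝ) : ℂ) := by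
      funext y
      have h : HasDerivAt (fun y => u t y) (c * ((deriv r y : ℝ) : ℂ)) y := by
        have := ((hrd y).hasDerivAt.ofReal_comp).const_mul c
        simp only [hu]
        exact this
      exact h.deriv
    have h2 : HasDerivAt (fun y => c * ((deriv r y : ℝ) : ℂ)) (c * ((deriv (deriv r) x : ℝ) : ℂ)) x :=
      ((hr2 x hx).hasDerivAt.ofReal_comp).const_mul c
    have hnorm : ‖u t x‖ ^ 2 = r x ^ 2 := by
      rw [hu, norm_mul]
      have : ‖c‖ = 1 := by
        simp [hc, Complex.norm_exp]
      rw [← hc, this, one_mul, Complex.norm_real, Real.norm_eq_abs, sq_abs]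
    rw [hinner, h2.deriv, h1.deriv, hnorm, hu, hφ, hode x hx]
    push_cast
    ring_nf
    rw [Complex.I_sq]
    ring
  · intro ψ hψ hψc hsupp
    -- partial derivatives of ψ
    set ψt : ℝ × ℝ → ℝ := fun p => fderiv ℝ ψ p (1, 0) with hψt
    set ψx : ℝ × ℝ → ℝ := fun p => fderiv ℝ ψ p (0, 1) with hψx
    have hψdiff : Differentiable ℝ ψ := hψ.differentiable (by simp)
    have hfd_cont : Continuous (fderiv ℝ ψ) := hψ.continuous_fderiv (by simp)
    have hψt_cont : Continuous ψt :=
      (ContinuousLinearMap.apply ℝ ℝ ((1:ℝ), (0:ℝ))).continuous.comp hfd_cont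
    have hψx_cont : Continuous ψx :=
      (ContinuousLinearMap.apply ℝ ℝ ((0:ℝ), (1:ℝ))).continuous.comp hfd_cont
    have hψt_cs : HasCompactSupport ψt := hψc.fderiv_apply (𝕜 := ℝ) ((1:ℝ), (0:ℝ))
    have hψx_cs : HasCompactSupport ψx := hψc.fderiv_apply (𝕜 := ℝ) ((0:ℝ), (1:ℝ))
    -- derivative identities
    have hdt : ∀ t x : ℝ, HasDerivAt (fun s => ψ (s, x)) (ψt (t, x)) t := by
      intro t x
      have h1 : HasDerivAt (fun s : ℝ => (s, x)) ((1:ℝ), (0:ℝ)) t :=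
        (hasDerivAt_id t).prodMk (hasDerivAt_const t x)
      exact (hψdiff (t, x)).hasFDerivAt.comp_hasDerivAt t h1
    have hdx : ∀ t x : ℝ, HasDerivAt (fun y => ψ (t, y)) (ψx (t, x)) x := by
      intro t x
      have h1 : HasDerivAt (fun y : ℝ => (t, y)) ((0:ℝ), (1:ℝ)) x :=
        (hasDerivAt_const x t).prodMk (hasDerivAt_id x)
      exact (hψdiff (t, x)).hasFDerivAt.comp_hasDerivAt x h1
    have edt : ∀ t x : ℝ, deriv (fun s => ψ (s, x)) t = ψt (t, x) := fun t x => (hdt t x).deriv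
    have edx : ∀ t x : ℝ, deriv (fun y => ψ (t, y)) x = ψx (t, x) := fun t x => (hdx t x).deriv
    -- slices
    have hembL : ∀ t : ℝ, Topology.IsClosedEmbedding (fun x : ℝ => (t, x)) := by
      intro t
      have : Isometry (fun x : ℝ => (t, x)) := by
        intro a c
        simp [Prod.edist_eq]
      exact this.isClosedEmbedding
    have hembR : ∀ x : ℝ, Topology.IsClosedEmbedding (fun t : ℝ => (t, x)) := by
      intro x
      have : Isometry (fun t : ℝ => (t, x)) := by
        intro a c
        simp [Prod.edist_eq]
      exact this.isClosedEmbedding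
    -- φ bounded measurable
    obtain ⟨M, hM⟩ := hrbd
    have hφ_meas : Measurable φ := by
      rw [show φ = fun x => -Real.sign x * Real.sqrt (ε * (r x) ^ 2 + 1) from funext hφ]
      exact (measurable_realSign.neg).mul
        ((Real.continuous_sqrt.measurable).comp
          (((measurable_const.mul ((hr1.continuous.measurable).pow measurable_const))).add
            measurable_const))
    have hφ_bd : ∀ x, |φ x| ≤ Real.sqrt (ε * M ^ 2 + 1) := by
      intro x
      rw [hφ, abs_mul, abs_neg]
      have h1 : |Real.sign x| ≤ 1 := by
        rcases Real.sign_apply_eq x with h | h | h <;> simp [h]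
      have h2 : |Real.sqrt (ε * r x ^ 2 + 1)| ≤ Real.sqrt (ε * M ^ 2 + 1) := by
        rw [abs_of_nonneg (Real.sqrt_nonneg _)]
        apply Real.sqrt_le_sqrt
        have : r x ^ 2 ≤ M ^ 2 := by
          have := hM x
          nlinarith [abs_nonneg (r x), le_abs_self (r x), neg_abs_le (r x)]
        nlinarith [hε.le]
      calc |Real.sign x| * |Real.sqrt (ε * r x ^ 2 + 1)| ≤ 1 * Real.sqrt (ε * M ^ 2 + 1) := by
            exact mul_le_mul h1 h2 (abs_nonneg _) zero_le_one
        _ = _ := one_mul _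
    -- integrabilities
    have hψt_slice_int : ∀ t : ℝ, Integrable (fun x => ψt (t, x)) := by
      intro t
      exact (hψt_cont.comp (continuous_const.prodMk continuous_id)).integrable_of_hasCompactSupport
        (hψt_cs.comp_isClosedEmbedding (hembL t))
    have hψx_slice_int : ∀ t : ℝ, Integrable (fun x => ψx (t, x)) := by
      intro t
      exact (hψx_cont.comp (continuous_const.prodMk continuous_id)).integrable_of_hasCompactSupport
        (hψx_cs.comp_isClosedEmbedding (hembL t))
    have hφψt_int : ∀ t : ℝ, Integrable (fun x => φ x * ψt (t, x)) := by
      intro t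
      exact (hψt_slice_int t).bdd_mul hφ_meas.aestronglyMeasurable (c := Real.sqrt (ε * M ^ 2 + 1)) (Filter.Eventually.of_forall fun x => by
        simpa [Real.norm_eq_abs] using hφ_bd x)
    -- the slice in t integrates to 0 on Ioi 0
    have ht_int_zero : ∀ x : ℝ, (∫ t in Set.Ioi (0:ℝ), ψt (t, x)) = 0 := by
      intro x
      have hslice : ContDiff ℝ 1 (fun s : ℝ => ψ (s, x)) :=
        (hψ.of_le (mod_cast le_top)).comp (contDiff_id.prodMk contDiff_const)
      have hslice_cs : HasCompactSupport (fun s : ℝ => ψ (s, x)) :=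
        hψc.comp_isClosedEmbedding (hembR x)
      have hder : (fun t => ψt (t, x)) = deriv (fun s : ℝ => ψ (s, x)) := by
        funext t; exact (edt t x).symm
      rw [hder, hslice_cs.integral_Ioi_deriv_eq hslice 0]
      have h0 : ψ (0, x) = 0 := by
        apply image_eq_zero_of_notMem_tsupport
        intro hmem
        exact absurd (hsupp hmem).1 (by simp)
      show -ψ (0, x) = 0
      rw [h0, neg_zero]
    -- the slice in x integrates to 0 on ℝ
    have hx_int_zero : ∀ t : ℝ, (∫ x : ℝ, ψx (t, x)) = 0 := by
      intro t
      have hslice : ContDiff ℝ 1 (fun y : ℝ => ψ (t, y)) :=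
        (hψ.of_le (mod_cast le_top)).comp (contDiff_const.prodMk contDiff_id)
      have hslice_cs : HasCompactSupport (fun y : ℝ => ψ (t, y)) :=
        hψc.comp_isClosedEmbedding (hembL t)
      have hder : (fun x => ψx (t, x)) = deriv (fun y : ℝ => ψ (t, y)) := by
        funext x; exact (edx t x).symm
      have hint : Integrable (deriv fun y : ℝ => ψ (t, y)) := by
        rw [← hder]; exact hψx_slice_int t
      rw [hder, ← integral_add_compl (measurableSet_Iic (a := (0:ℝ))) hint, Set.compl_Iic,
        hslice_cs.integral_Iic_deriv_eq hslice 0, hslice_cs.integral_Ioi_deriv_eq hslice 0]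
      ring
    -- almost-everywhere coefficient is 1
    have hae : ∀ᵐ x : ℝ, φ x ^ 2 - ε * r x ^ 2 = 1 := by
      have h0 : ∀ᵐ x : ℝ, x ≠ 0 := by
        rw [ae_iff]
        have he : {x : ℝ | ¬ x ≠ 0} = {0} := by ext y; simp
        rw [he]
        exact measure_singleton 0
      filter_upwards [h0] with x hx
      have hs : Real.sign x = 1 ∨ Real.sign x = -1 := by
        rcases lt_or_gt_of_ne hx with h | h
        · exact Or.inr (Real.sign_of_neg h)
        · exact Or.inl (Real.sign_of_pos h)
      have hsq : Real.sqrt (ε * r x ^ 2 + 1) ^ 2 = ε * r x ^ 2 + 1 := by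
        apply Real.sq_sqrt
        nlinarith [sq_nonneg (r x), hε.le]
      rw [hφ]
      rcases hs with h | h <;> rw [h] <;> nlinarith [hsq]
    -- inner integral simplification
    have key : ∀ t : ℝ, (∫ x : ℝ,
        (φ x * deriv (fun s => ψ (s, x)) t
          + (φ x ^ 2 - ε * (r x) ^ 2) * deriv (fun y => ψ (t, y)) x))
        = ∫ x : ℝ, φ x * ψt (t, x) := by
      intro t
      have step1 : (∫ x : ℝ,
          (φ x * deriv (fun s => ψ (s, x)) t
            + (φ x ^ 2 - ε * (r x) ^ 2) * deriv (fun y => ψ (t, y)) x))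
          = ∫ x : ℝ, (φ x * ψt (t, x) + ψx (t, x)) := by
        apply integral_congr_ae
        filter_upwards [hae] with x hx
        rw [edt t x, edx t x, hx, one_mul]
      rw [step1, integral_add (hφψt_int t) (hψx_slice_int t), hx_int_zero t, add_zero]
    -- full product integrability for Fubini
    have hprod_int : Integrable (fun p : ℝ × ℝ => φ p.2 * ψt p)
        ((volume.restrict (Set.Ioi (0:ℝ))).prod volume) := by
      have h1 : Integrable ψt (volume : Measure (ℝ × ℝ)) :=
        hψt_cont.integrable_of_hasCompactSupport hψt_cs
      have h2 : Integrable (fun p : ℝ × ℝ => φ p.2 * ψt p) (volume : Measure (ℝ × ℝ)) :=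
        h1.bdd_mul (hφ_meas.comp measurable_snd).aestronglyMeasurable (c := Real.sqrt (ε * M ^ 2 + 1)) (Filter.Eventually.of_forall fun p => by
          simpa [Real.norm_eq_abs] using hφ_bd p.2)
      have h3 : (volume.restrict (Set.Ioi (0:ℝ))).prod volume
          = (volume : Measure (ℝ × ℝ)).restrict (Set.Ioi (0:ℝ) ×ˢ Set.univ) := by
        rw [MeasureTheory.Measure.volume_eq_prod ℝ ℝ, ← Measure.prod_restrict, Measure.restrict_univ]
      rw [h3]
      exact h2.restrict
    calc (∫ t in Set.Ioi (0 : ℝ), ∫ x : ℝ,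
          (φ x * deriv (fun s => ψ (s, x)) t
            + (φ x ^ 2 - ε * (r x) ^ 2) * deriv (fun y => ψ (t, y)) x))
        = ∫ t in Set.Ioi (0:ℝ), ∫ x : ℝ, φ x * ψt (t, x) := by
          apply integral_congr_ae
          exact Filter.Eventually.of_forall key
      _ = ∫ x : ℝ, ∫ t in Set.Ioi (0:ℝ), φ x * ψt (t, x) := integral_integral_swap hprod_int
      _ = ∫ x : ℝ, (0:ℝ) := by
          apply integral_congr_ae
          apply Filter.Eventually.of_forall
          intro x
          show (∫ t in Set.Ioi (0:ℝ), φ x * ψt (t, x)) = 0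
          rw [integral_const_mul, ht_int_zero x, mul_zero]
      _ = 0 := integral_zero _ _
end

section
/- Let T > 0 and let v₀ : ℝ → ℝ be continuous and integrable. Define ṽ(t,x) = v₀(x - 2t) for x < 0 and ṽ(t,x) = v₀(x + 2t) for x > 0, and Ψ(t) = ∫_{-2t}^{2t} v₀(x) dx. Then the pair (ṽ, Ψ) solves the linearized transport equation v_t + 2(φ v)_x = 0 with φ(x) = -sgn(x) and with the singular product φ·δ_Σ defined to be 0, in the following distributional sense: for every smooth compactly supported test function ψ : (0,T) × ℝ → ℝ, ∫₀^T ∫_ℝ ṽ(t,x)·( ∂_t ψ(t,x) - 2·sgn(x)·∂_x ψ(t,x) ) dx dt + ∫₀^T Ψ(t)·∂_t ψ(t,0) dt = 0. -/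
set_option maxHeartbeats 1000000


open MeasureTheory Set

noncomputable def auxL (v₀ : ℝ → ℝ) (D : ℝ × ℝ → ℝ × ℝ →L[ℝ] ℝ) (t u : ℝ) : ℝ :=
  if u < -(2 * t) then v₀ u * D (t, u + 2 * t) (1, 2) else 0

noncomputable def auxR (v₀ : ℝ → ℝ) (D : ℝ × ℝ → ℝ × ℝ →L[ℝ] ℝ) (t u : ℝ) : ℝ :=
  if 2 * t < u then v₀ u * D (t, u - 2 * t) (1, -2) else 0

noncomputable def auxF1 (v₀ : ℝ → ℝ) (ψ : ℝ × ℝ → ℝ) (u : ℝ) : ℝ := v₀ u * ψ (u / 2, 0)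

noncomputable def auxF2 (v₀ : ℝ → ℝ) (ψ : ℝ × ℝ → ℝ) (u : ℝ) : ℝ := v₀ u * ψ (-(u / 2), 0)

/-- the pair `(ṽ, Ψ)`, i.e. the distribution `v = ṽ + Ψ(t) δ_Σ`, solves the
linearized transport equation `v_t + 2(φ v)_x = 0` (with `φ = -sgn` and `φ·δ_Σ := 0`)
in the distributional sense. -/
theorem stmt_6 (T : ℝ) (hT : 0 < T) (v₀ : ℝ → ℝ)
    (hc : Continuous v₀) (hi : Integrable v₀)
    (vt : ℝ → ℝ → ℝ)
    (hvt : ∀ t x : ℝ, vt t x = if x < 0 then v₀ (x - 2 * t) else v₀ (x + 2 * t))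
    (Ψ : ℝ → ℝ) (hΨ : ∀ t : ℝ, Ψ t = ∫ x in (-(2 * t))..(2 * t), v₀ x) :
    ∀ ψ : ℝ × ℝ → ℝ, ContDiff ℝ (⊤ : ℕ∞) ψ → HasCompactSupport ψ →
      tsupport ψ ⊆ Set.Ioo (0 : ℝ) T ×ˢ (Set.univ : Set ℝ) →
      (∫ t in (0 : ℝ)..T, ∫ x : ℝ,
          vt t x * (deriv (fun s => ψ (s, x)) t - 2 * Real.sign x * deriv (fun y => ψ (t, y)) x))
        + (∫ t in (0 : ℝ)..T, Ψ t * deriv (fun s => ψ (s, 0)) t) = 0 := by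
  intro ψ hψ hcs hsupp
  set D : ℝ × ℝ → ℝ × ℝ →L[ℝ] ℝ := fderiv ℝ ψ with hDdef
  have hdiff : Differentiable ℝ ψ := hψ.differentiable (by simp)
  have hψc : Continuous ψ := hψ.continuous
  have hDc : Continuous D := hψ.continuous_fderiv (by simp)
  have hDapp : ∀ v : ℝ × ℝ, Continuous fun p : ℝ × ℝ => D p v :=
    fun v => hDc.clm_apply continuous_const
  -- vanishing of ψ and D off (0,T) × ℝ
  have hz : ∀ p : ℝ × ℝ, p.1 ∉ Set.Ioo (0 : ℝ) T → ψ p = 0 := by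
    intro p hp
    apply image_eq_zero_of_notMem_tsupport
    intro hmem
    exact hp (hsupp hmem).1
  have hDz : ∀ p : ℝ × ℝ, p.1 ∉ Set.Ioo (0 : ℝ) T → D p = 0 := by
    intro p hp
    by_contra h
    exact hp (hsupp (support_fderiv_subset ℝ h)).1
  have hDcs : HasCompactSupport D := hcs.fderiv ℝ
  -- bounds
  obtain ⟨M₁, hM₁⟩ : ∃ C, ∀ p : ℝ × ℝ, ‖D p ((1 : ℝ), (2 : ℝ))‖ ≤ C :=
    (hDapp (1, 2)).bounded_above_of_compact_support (hDcs.comp_left (g := fun L : ℝ × ℝ →L[ℝ] ℝ => L (1, 2)) (by simp))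
  obtain ⟨M₂, hM₂⟩ : ∃ C, ∀ p : ℝ × ℝ, ‖D p ((1 : ℝ), (-2 : ℝ))‖ ≤ C :=
    (hDapp (1, -2)).bounded_above_of_compact_support (hDcs.comp_left (g := fun L : ℝ × ℝ →L[ℝ] ℝ => L (1, -2)) (by simp))
  have hM₁0 : 0 ≤ M₁ := le_trans (norm_nonneg _) (hM₁ (0, 0))
  have hM₂0 : 0 ≤ M₂ := le_trans (norm_nonneg _) (hM₂ (0, 0))
  -- partial derivatives
  have hA' : ∀ (x t : ℝ), HasDerivAt (fun s => ψ (s, x)) (D (t, x) (1, 0)) t := by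
    intro x t
    have h1 : HasDerivAt (fun s : ℝ => (s, x)) ((1 : ℝ), (0 : ℝ)) t :=
      (hasDerivAt_id t).prodMk (hasDerivAt_const t x)
    exact (hdiff (t, x)).hasFDerivAt.comp_hasDerivAt t h1
  have hA : ∀ t x : ℝ, deriv (fun s => ψ (s, x)) t = D (t, x) (1, 0) := fun t x => (hA' x t).deriv
  have hB' : ∀ (t x : ℝ), HasDerivAt (fun y => ψ (t, y)) (D (t, x) (0, 1)) x := by
    intro t x
    have h1 : HasDerivAt (fun y : ℝ => (t, y)) ((0 : ℝ), (1 : ℝ)) x :=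
      (hasDerivAt_const x t).prodMk (hasDerivAt_id x)
    exact (hdiff (t, x)).hasFDerivAt.comp_hasDerivAt x h1
  have hB : ∀ t x : ℝ, deriv (fun y => ψ (t, y)) x = D (t, x) (0, 1) := fun t x => (hB' t x).deriv
  have keyP : ∀ (u x : ℝ), HasDerivAt (fun s => ψ (s, u + 2 * s)) (D (x, u + 2 * x) (1, 2)) x := by
    intro u x
    have h2 : HasDerivAt (fun s : ℝ => u + 2 * s) (2 : ℝ) x := by
      simpa using ((hasDerivAt_id x).const_mul (2 : ℝ)).const_add u
    have h1 : HasDerivAt (fun s : ℝ => (s, u + 2 * s)) ((1 : ℝ), (2 : ℝ)) x :=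
      (hasDerivAt_id x).prodMk h2
    exact (hdiff (x, u + 2 * x)).hasFDerivAt.comp_hasDerivAt x h1
  have keyM : ∀ (u x : ℝ), HasDerivAt (fun s => ψ (s, u - 2 * s)) (D (x, u - 2 * x) (1, -2)) x := by
    intro u x
    have h2 : HasDerivAt (fun s : ℝ => u - 2 * s) (-2 : ℝ) x := by
      simpa using ((hasDerivAt_id x).const_mul (2 : ℝ)).const_sub u
    have h1 : HasDerivAt (fun s : ℝ => (s, u - 2 * s)) ((1 : ℝ), (-2 : ℝ)) x :=
      (hasDerivAt_id x).prodMk h2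
    exact (hdiff (x, u - 2 * x)).hasFDerivAt.comp_hasDerivAt x h1
  have hlin : ∀ (p : ℝ × ℝ) (a : ℝ), D p (1, a) = D p (1, 0) + a * D p (0, 1) := by
    intro p a
    have h : ((1 : ℝ), a) = ((1 : ℝ), (0 : ℝ)) + a • ((0 : ℝ), (1 : ℝ)) := by
      simp [Prod.ext_iff]
    rw [h, map_add, (D p).map_smul, smul_eq_mul]
  -- Step 1: spatial integral at fixed time
  have hIx : ∀ t : ℝ,
      (∫ x : ℝ, vt t x * (D (t, x) (1, 0) - 2 * Real.sign x * D (t, x) (0, 1)))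
        = (∫ u, auxL v₀ D t u) + ∫ u, auxR v₀ D t u := by
    intro t
    have hEqIio : Set.EqOn (fun x => vt t x * (D (t, x) (1, 0) - 2 * Real.sign x * D (t, x) (0, 1)))
        (fun x => v₀ (x - 2 * t) * D (t, x) (1, 2)) (Iio 0) := by
      intro x hx
      have hx' : x < 0 := hx
      simp only [hvt, if_pos hx', Real.sign_of_neg hx']
      rw [hlin (t, x) 2]
      ring
    have hEqIoi : Set.EqOn (fun x => vt t x * (D (t, x) (1, 0) - 2 * Real.sign x * D (t, x) (0, 1)))
        (fun x => v₀ (x + 2 * t) * D (t, x) (1, -2)) (Ioi 0) := by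
      intro x hx
      have hx' : (0 : ℝ) < x := hx
      simp only [hvt, if_neg (not_lt.mpr hx'.le), Real.sign_of_pos hx']
      rw [hlin (t, x) (-2)]
      ring
    have hgL : Integrable (fun x => v₀ (x - 2 * t) * D (t, x) (1, 2)) := by
      have h1 : Integrable (fun x => D (t, x) (1, 2) * v₀ (x - 2 * t)) :=
        Integrable.bdd_mul (hi.comp_sub_right (2 * t))
          (((hDapp (1, 2)).comp (continuous_const.prodMk continuous_id)).aestronglyMeasurable)
          (Filter.Eventually.of_forall fun x => hM₁ (t, x))
      exact h1.congr (Filter.Eventually.of_forall fun x => mul_comm _ _)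
    have hgR : Integrable (fun x => v₀ (x + 2 * t) * D (t, x) (1, -2)) := by
      have h1 : Integrable (fun x => D (t, x) (1, -2) * v₀ (x + 2 * t)) :=
        Integrable.bdd_mul (hi.comp_add_right (2 * t))
          (((hDapp (1, -2)).comp (continuous_const.prodMk continuous_id)).aestronglyMeasurable)
          (Filter.Eventually.of_forall fun x => hM₂ (t, x))
      exact h1.congr (Filter.Eventually.of_forall fun x => mul_comm _ _)
    have hfIio : IntegrableOn
        (fun x => vt t x * (D (t, x) (1, 0) - 2 * Real.sign x * D (t, x) (0, 1))) (Iio 0) :=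
      (hgL.integrableOn).congr_fun hEqIio.symm measurableSet_Iio
    have hfIci : IntegrableOn
        (fun x => vt t x * (D (t, x) (1, 0) - 2 * Real.sign x * D (t, x) (0, 1))) (Ici 0) := by
      apply (hgR.integrableOn (s := Ici 0)).congr
      have h0 : ∀ᵐ x : ℝ, x ≠ 0 := by
        have h1 : {x : ℝ | ¬x ≠ 0} = {0} := by ext x; simp
        exact ae_iff.mpr (by rw [h1]; exact measure_singleton 0)
      filter_upwards [ae_restrict_mem measurableSet_Ici, ae_restrict_of_ae h0] with x hx hx0
      exact (hEqIoi (lt_of_le_of_ne hx (Ne.symm hx0))).symm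
    have hTL : (∫ x in Iio (0 : ℝ), v₀ (x - 2 * t) * D (t, x) (1, 2)) = ∫ u, auxL v₀ D t u := by
      rw [← integral_indicator measurableSet_Iio,
        ← integral_add_right_eq_self
          (fun x => (Iio (0 : ℝ)).indicator (fun x => v₀ (x - 2 * t) * D (t, x) (1, 2)) x) (2 * t)]
      congr 1
      funext u
      by_cases h : u < -(2 * t)
      · have hm : u + 2 * t ∈ Iio (0 : ℝ) := by rw [mem_Iio]; linarith
        rw [indicator_of_mem hm]
        simp only [auxL, if_pos h]
        have e : u + 2 * t - 2 * t = u := by ring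
        rw [e]
      · have hm : u + 2 * t ∉ Iio (0 : ℝ) := by rw [mem_Iio]; intro hh; exact h (by linarith)
        rw [indicator_of_notMem hm]
        simp only [auxL, if_neg h]
    have hTR : (∫ x in Ioi (0 : ℝ), v₀ (x + 2 * t) * D (t, x) (1, -2)) = ∫ u, auxR v₀ D t u := by
      rw [← integral_indicator measurableSet_Ioi,
        ← integral_sub_right_eq_self
          (fun x => (Ioi (0 : ℝ)).indicator (fun x => v₀ (x + 2 * t) * D (t, x) (1, -2)) x) (2 * t)]
      congr 1
      funext u
      by_cases h : 2 * t < u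
      · have hm : u - 2 * t ∈ Ioi (0 : ℝ) := by rw [mem_Ioi]; linarith
        rw [indicator_of_mem hm]
        simp only [auxR, if_pos h]
        have e : u - 2 * t + 2 * t = u := by ring
        rw [e]
      · have hm : u - 2 * t ∉ Ioi (0 : ℝ) := by rw [mem_Ioi]; intro hh; exact h (by linarith)
        rw [indicator_of_notMem hm]
        simp only [auxR, if_neg h]
    rw [← intervalIntegral.integral_Iio_add_Ici hfIio hfIci, integral_Ici_eq_integral_Ioi,
      setIntegral_congr_fun measurableSet_Iio hEqIio,
      setIntegral_congr_fun measurableSet_Ioi hEqIoi, hTL, hTR]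
  -- integrability on the product space
  have hmeasL : AEStronglyMeasurable (Function.uncurry (auxL v₀ D)) (volume.prod volume) := by
    have he : Function.uncurry (auxL v₀ D) = fun p : ℝ × ℝ =>
        Set.indicator {q : ℝ × ℝ | q.2 < -(2 * q.1)}
          (fun q => v₀ q.2 * D (q.1, q.2 + 2 * q.1) (1, 2)) p := by
      funext p
      obtain ⟨t, u⟩ := p
      simp only [Function.uncurry_apply_pair, auxL, Set.indicator_apply, Set.mem_setOf_eq]
    rw [he]
    refine (Measurable.indicator ?_ ?_).aestronglyMeasurable
    · exact (hc.measurable.comp measurable_snd).mul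
        ((hDapp (1, 2)).measurable.comp
          (measurable_fst.prodMk (measurable_snd.add (measurable_fst.const_mul 2))))
    · exact measurableSet_lt measurable_snd ((measurable_fst.const_mul 2).neg)
  have hmeasR : AEStronglyMeasurable (Function.uncurry (auxR v₀ D)) (volume.prod volume) := by
    have he : Function.uncurry (auxR v₀ D) = fun p : ℝ × ℝ =>
        Set.indicator {q : ℝ × ℝ | 2 * q.1 < q.2}
          (fun q => v₀ q.2 * D (q.1, q.2 - 2 * q.1) (1, -2)) p := by
      funext p
      obtain ⟨t, u⟩ := p
      simp only [Function.uncurry_apply_pair, auxR, Set.indicator_apply, Set.mem_setOf_eq]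
    rw [he]
    refine (Measurable.indicator ?_ ?_).aestronglyMeasurable
    · exact (hc.measurable.comp measurable_snd).mul
        ((hDapp (1, -2)).measurable.comp
          (measurable_fst.prodMk (measurable_snd.sub (measurable_fst.const_mul 2))))
    · exact measurableSet_lt (measurable_fst.const_mul 2) measurable_snd
  have hbd1 : Integrable (fun p : ℝ × ℝ => (Icc (0 : ℝ) T).indicator (fun _ => M₁) p.1 * |v₀ p.2|)
      (volume.prod volume) := by
    refine Integrable.mul_prod ?_ hi.abs
    exact (integrable_indicator_iff measurableSet_Icc).2
      (integrableOn_const measure_Icc_lt_top.ne)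
  have hbd2 : Integrable (fun p : ℝ × ℝ => (Icc (0 : ℝ) T).indicator (fun _ => M₂) p.1 * |v₀ p.2|)
      (volume.prod volume) := by
    refine Integrable.mul_prod ?_ hi.abs
    exact (integrable_indicator_iff measurableSet_Icc).2
      (integrableOn_const measure_Icc_lt_top.ne)
  have hIntL : Integrable (Function.uncurry (auxL v₀ D)) (volume.prod volume) := by
    refine hbd1.mono' hmeasL (Filter.Eventually.of_forall ?_)
    rintro ⟨t, u⟩
    by_cases ht : t ∈ Icc (0 : ℝ) T
    · rw [indicator_of_mem ht]
      simp only [Function.uncurry_apply_pair, auxL]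
      by_cases h : u < -(2 * t)
      · rw [if_pos h, Real.norm_eq_abs, abs_mul]
        have h1 : |D (t, u + 2 * t) (1, 2)| ≤ M₁ := by
          simpa [Real.norm_eq_abs] using hM₁ (t, u + 2 * t)
        nlinarith [abs_nonneg (v₀ u), abs_nonneg (D (t, u + 2 * t) ((1 : ℝ), (2 : ℝ)))]
      · rw [if_neg h]
        simp
        positivity
    · have hDzz : D (t, u + 2 * t) = 0 := hDz _ (fun hm => ht (Ioo_subset_Icc_self hm))
      rw [indicator_of_notMem ht]
      simp only [Function.uncurry_apply_pair, auxL, hDzz, ContinuousLinearMap.zero_apply,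
        mul_zero, ite_self, norm_zero, zero_mul]
      positivity
  have hIntR : Integrable (Function.uncurry (auxR v₀ D)) (volume.prod volume) := by
    refine hbd2.mono' hmeasR (Filter.Eventually.of_forall ?_)
    rintro ⟨t, u⟩
    by_cases ht : t ∈ Icc (0 : ℝ) T
    · rw [indicator_of_mem ht]
      simp only [Function.uncurry_apply_pair, auxR]
      by_cases h : 2 * t < u
      · rw [if_pos h, Real.norm_eq_abs, abs_mul]
        have h1 : |D (t, u - 2 * t) (1, -2)| ≤ M₂ := by
          simpa [Real.norm_eq_abs] using hM₂ (t, u - 2 * t)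
        nlinarith [abs_nonneg (v₀ u), abs_nonneg (D (t, u - 2 * t) ((1 : ℝ), (-2 : ℝ)))]
      · rw [if_neg h]
        simp
        positivity
    · have hDzz : D (t, u - 2 * t) = 0 := hDz _ (fun hm => ht (Ioo_subset_Icc_self hm))
      rw [indicator_of_notMem ht]
      simp only [Function.uncurry_apply_pair, auxR, hDzz, ContinuousLinearMap.zero_apply,
        mul_zero, ite_self, norm_zero, zero_mul]
      positivity
  -- inner time integrals
  have hinnerL : ∀ u : ℝ, (∫ t, auxL v₀ D t u) = auxF2 v₀ ψ u := by
    intro u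
    have hrw : (fun t => auxL v₀ D t u)
        = Set.indicator (Iio (-(u / 2))) (fun t => v₀ u * D (t, u + 2 * t) (1, 2)) := by
      funext t
      simp only [auxL, Set.indicator_apply, Set.mem_Iio]
      by_cases h : u < -(2 * t)
      · rw [if_pos h, if_pos (by linarith)]
      · rw [if_neg h, if_neg (by intro h2; exact h (by linarith))]
    rw [hrw, integral_indicator measurableSet_Iio, integral_const_mul]
    simp only [auxF2]
    congr 1
    have hcontD : Continuous (fun t : ℝ => D (t, u + 2 * t) (1, 2)) :=
      (hDapp (1, 2)).comp
        (continuous_id.prodMk (continuous_const.add (continuous_const.mul continuous_id)))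
    have hcs' : HasCompactSupport (fun t : ℝ => D (t, u + 2 * t) (1, 2)) := by
      apply HasCompactSupport.intro (isCompact_Icc (a := (0 : ℝ)) (b := T))
      intro t ht
      have hzz : D (t, u + 2 * t) = 0 := hDz _ (fun hm => ht (Ioo_subset_Icc_self hm))
      simp [hzz]
    have hint' : IntegrableOn (fun t : ℝ => D (t, u + 2 * t) (1, 2)) (Iic (-(u / 2))) volume :=
      (hcontD.integrable_of_hasCompactSupport hcs').integrableOn
    have hcont : ContinuousWithinAt (fun t : ℝ => ψ (t, u + 2 * t)) (Iic (-(u / 2))) (-(u / 2)) :=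
      (hψc.comp
        (continuous_id.prodMk (continuous_const.add (continuous_const.mul continuous_id)))).continuousWithinAt
    have hlim : Filter.Tendsto (fun t : ℝ => ψ (t, u + 2 * t)) Filter.atBot (nhds 0) := by
      have hev : (fun _ : ℝ => (0 : ℝ)) =ᶠ[Filter.atBot] fun t : ℝ => ψ (t, u + 2 * t) := by
        filter_upwards [Filter.Iic_mem_atBot (0 : ℝ)] with t ht
        exact (hz (t, u + 2 * t) (fun hm => absurd hm.1 (not_lt.mpr ht))).symm
      exact Filter.Tendsto.congr' hev tendsto_const_nhds
    have hFTC := MeasureTheory.integral_Iic_of_hasDerivAt_of_tendsto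
      (f := fun t : ℝ => ψ (t, u + 2 * t)) (f' := fun t : ℝ => D (t, u + 2 * t) (1, 2))
      (a := -(u / 2)) (m := 0) hcont (fun x _ => keyP u x) hint' hlim
    rw [← integral_Iic_eq_integral_Iio, hFTC, sub_zero]
    have e : u + 2 * (-(u / 2)) = 0 := by ring
    calc (fun t : ℝ => ψ (t, u + 2 * t)) (-(u / 2)) = ψ (-(u / 2), u + 2 * (-(u / 2))) := rfl
      _ = ψ (-(u / 2), 0) := by rw [e]
  have hinnerR : ∀ u : ℝ, (∫ t, auxR v₀ D t u) = auxF1 v₀ ψ u := by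
    intro u
    have hrw : (fun t => auxR v₀ D t u)
        = Set.indicator (Iio (u / 2)) (fun t => v₀ u * D (t, u - 2 * t) (1, -2)) := by
      funext t
      simp only [auxR, Set.indicator_apply, Set.mem_Iio]
      by_cases h : 2 * t < u
      · rw [if_pos h, if_pos (by linarith)]
      · rw [if_neg h, if_neg (by intro h2; exact h (by linarith))]
    rw [hrw, integral_indicator measurableSet_Iio, integral_const_mul]
    simp only [auxF1]
    congr 1
    have hcontD : Continuous (fun t : ℝ => D (t, u - 2 * t) (1, -2)) :=
      (hDapp (1, -2)).comp
        (continuous_id.prodMk (continuous_const.sub (continuous_const.mul continuous_id)))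
    have hcs' : HasCompactSupport (fun t : ℝ => D (t, u - 2 * t) (1, -2)) := by
      apply HasCompactSupport.intro (isCompact_Icc (a := (0 : ℝ)) (b := T))
      intro t ht
      have hzz : D (t, u - 2 * t) = 0 := hDz _ (fun hm => ht (Ioo_subset_Icc_self hm))
      simp [hzz]
    have hint' : IntegrableOn (fun t : ℝ => D (t, u - 2 * t) (1, -2)) (Iic (u / 2)) volume :=
      (hcontD.integrable_of_hasCompactSupport hcs').integrableOn
    have hcont : ContinuousWithinAt (fun t : ℝ => ψ (t, u - 2 * t)) (Iic (u / 2)) (u / 2) :=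
      (hψc.comp
        (continuous_id.prodMk (continuous_const.sub (continuous_const.mul continuous_id)))).continuousWithinAt
    have hlim : Filter.Tendsto (fun t : ℝ => ψ (t, u - 2 * t)) Filter.atBot (nhds 0) := by
      have hev : (fun _ : ℝ => (0 : ℝ)) =ᶠ[Filter.atBot] fun t : ℝ => ψ (t, u - 2 * t) := by
        filter_upwards [Filter.Iic_mem_atBot (0 : ℝ)] with t ht
        exact (hz (t, u - 2 * t) (fun hm => absurd hm.1 (not_lt.mpr ht))).symm
      exact Filter.Tendsto.congr' hev tendsto_const_nhds
    have hFTC := MeasureTheory.integral_Iic_of_hasDerivAt_of_tendsto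
      (f := fun t : ℝ => ψ (t, u - 2 * t)) (f' := fun t : ℝ => D (t, u - 2 * t) (1, -2))
      (a := u / 2) (m := 0) hcont (fun x _ => keyM u x) hint' hlim
    rw [← integral_Iic_eq_integral_Iio, hFTC, sub_zero]
    have e : u - 2 * (u / 2) = 0 := by ring
    calc (fun t : ℝ => ψ (t, u - 2 * t)) (u / 2) = ψ (u / 2, u - 2 * (u / 2)) := rfl
      _ = ψ (u / 2, 0) := by rw [e]
  -- extend the time integral to all of ℝ
  have hLz : ∀ t ∉ Ioc (0 : ℝ) T, (∫ u, auxL v₀ D t u) = 0 := by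
    intro t ht
    have h0 : ∀ u, auxL v₀ D t u = 0 := by
      intro u
      have hzz : D (t, u + 2 * t) = 0 := hDz _ (fun hm => ht (Ioo_subset_Ioc_self hm))
      simp [auxL, hzz]
    simp only [h0, integral_zero]
  have hRz : ∀ t ∉ Ioc (0 : ℝ) T, (∫ u, auxR v₀ D t u) = 0 := by
    intro t ht
    have h0 : ∀ u, auxR v₀ D t u = 0 := by
      intro u
      have hzz : D (t, u - 2 * t) = 0 := hDz _ (fun hm => ht (Ioo_subset_Ioc_self hm))
      simp [auxR, hzz]
    simp only [h0, integral_zero]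
  have hL0T : (∫ t in (0 : ℝ)..T, ∫ u, auxL v₀ D t u) = ∫ t, ∫ u, auxL v₀ D t u := by
    rw [intervalIntegral.integral_of_le hT.le]
    exact setIntegral_eq_integral_of_forall_compl_eq_zero hLz
  have hR0T : (∫ t in (0 : ℝ)..T, ∫ u, auxR v₀ D t u) = ∫ t, ∫ u, auxR v₀ D t u := by
    rw [intervalIntegral.integral_of_le hT.le]
    exact setIntegral_eq_integral_of_forall_compl_eq_zero hRz
  have hIL : IntervalIntegrable (fun t => ∫ u, auxL v₀ D t u) volume 0 T := by
    have h := hIntL.integral_prod_left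
    simp only [Function.uncurry_apply_pair] at h
    exact h.intervalIntegrable
  have hIR : IntervalIntegrable (fun t => ∫ u, auxR v₀ D t u) volume 0 T := by
    have h := hIntR.integral_prod_left
    simp only [Function.uncurry_apply_pair] at h
    exact h.intervalIntegrable
  -- the first (double-integral) term
  have hfirst : (∫ t in (0 : ℝ)..T, ∫ x : ℝ,
      vt t x * (D (t, x) (1, 0) - 2 * Real.sign x * D (t, x) (0, 1)))
      = (∫ u, auxF2 v₀ ψ u) + ∫ u, auxF1 v₀ ψ u := by
    calc (∫ t in (0 : ℝ)..T, ∫ x : ℝ,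
        vt t x * (D (t, x) (1, 0) - 2 * Real.sign x * D (t, x) (0, 1)))
        = ∫ t in (0 : ℝ)..T, ((∫ u, auxL v₀ D t u) + ∫ u, auxR v₀ D t u) :=
          intervalIntegral.integral_congr (fun t _ => hIx t)
      _ = (∫ t in (0 : ℝ)..T, ∫ u, auxL v₀ D t u) + ∫ t in (0 : ℝ)..T, ∫ u, auxR v₀ D t u :=
          intervalIntegral.integral_add hIL hIR
      _ = (∫ t, ∫ u, auxL v₀ D t u) + ∫ t, ∫ u, auxR v₀ D t u := by rw [hL0T, hR0T]
      _ = (∫ u, ∫ t, auxL v₀ D t u) + ∫ u, ∫ t, auxR v₀ D t u := by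
          rw [integral_integral_swap hIntL, integral_integral_swap hIntR]
      _ = (∫ u, auxF2 v₀ ψ u) + ∫ u, auxF1 v₀ ψ u := by
          have l1 : (∫ u, ∫ t, auxL v₀ D t u) = ∫ u, auxF2 v₀ ψ u :=
            integral_congr_ae (Filter.Eventually.of_forall fun u => hinnerL u)
          have l2 : (∫ u, ∫ t, auxR v₀ D t u) = ∫ u, auxF1 v₀ ψ u :=
            integral_congr_ae (Filter.Eventually.of_forall fun u => hinnerR u)
          rw [l1, l2]
  -- derivative of Ψ
  have hF : ∀ x : ℝ, HasDerivAt (fun y : ℝ => ∫ s in (0 : ℝ)..y, v₀ s) (v₀ x) x := fun x =>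
    intervalIntegral.integral_hasDerivAt_right (hi.intervalIntegrable)
      (hc.stronglyMeasurable.stronglyMeasurableAtFilter) hc.continuousAt
  have hΨderiv : ∀ t : ℝ, HasDerivAt Ψ (2 * v₀ (2 * t) + 2 * v₀ (-(2 * t))) t := by
    intro t
    have hin1 : HasDerivAt (fun y : ℝ => 2 * y) (2 : ℝ) t := by
      simpa using (hasDerivAt_id t).const_mul (2 : ℝ)
    have hin2 : HasDerivAt (fun y : ℝ => -(2 * y)) (-2 : ℝ) t := by
      simpa using ((hasDerivAt_id t).const_mul (2 : ℝ)).fun_neg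
    have h1 : HasDerivAt (fun y : ℝ => ∫ s in (0 : ℝ)..(2 * y), v₀ s) (2 * v₀ (2 * t)) t := by
      have h := (hF (2 * t)).comp t hin1
      have e : v₀ (2 * t) * 2 = 2 * v₀ (2 * t) := mul_comm _ _
      exact e ▸ h
    have h2 : HasDerivAt (fun y : ℝ => ∫ s in (0 : ℝ)..(-(2 * y)), v₀ s)
        (-2 * v₀ (-(2 * t))) t := by
      have h := (hF (-(2 * t))).comp t hin2
      have e : v₀ (-(2 * t)) * (-2) = -2 * v₀ (-(2 * t)) := mul_comm _ _
      exact e ▸ h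
    have hΨeq : Ψ = fun s : ℝ => (∫ x in (0 : ℝ)..(2 * s), v₀ x)
        - ∫ x in (0 : ℝ)..(-(2 * s)), v₀ x := by
      funext s
      rw [hΨ s]
      exact (intervalIntegral.integral_interval_sub_left (hi.intervalIntegrable)
        (hi.intervalIntegrable)).symm
    have hfin := h1.sub h2
    have e : 2 * v₀ (2 * t) - -2 * v₀ (-(2 * t)) = 2 * v₀ (2 * t) + 2 * v₀ (-(2 * t)) := by ring
    rw [hΨeq]
    exact e ▸ hfin
  -- boundary values
  have hψT : ψ (T, 0) = 0 := hz (T, 0) (fun hm => absurd hm.2 (lt_irrefl T))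
  have hψ0 : ψ ((0 : ℝ), (0 : ℝ)) = 0 := hz (0, 0) (fun hm => absurd hm.1 (lt_irrefl 0))
  -- vanishing of auxF1, auxF2 outside compact interval
  have hA1 : (∫ x in (0 : ℝ)..(2 * T), auxF1 v₀ ψ x) = ∫ x, auxF1 v₀ ψ x := by
    rw [intervalIntegral.integral_of_le (by linarith)]
    refine setIntegral_eq_integral_of_forall_compl_eq_zero ?_
    intro u hu
    simp only [auxF1]
    rw [hz (u / 2, 0) (fun hm => hu ⟨by linarith [hm.1], by linarith [hm.2]⟩), mul_zero]
  have hA2 : (∫ x in (0 : ℝ)..((-2) * T), auxF2 v₀ ψ x) = -∫ x, auxF2 v₀ ψ x := by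
    rw [intervalIntegral.integral_symm]
    congr 1
    rw [intervalIntegral.integral_of_le (by linarith)]
    refine setIntegral_eq_integral_of_forall_compl_eq_zero ?_
    intro u hu
    simp only [auxF2]
    rw [hz (-(u / 2), 0) (fun hm => hu ⟨by linarith [hm.2], by linarith [hm.1]⟩), mul_zero]
  -- the boundary-term computation
  have hsum : (∫ t in (0 : ℝ)..T, (2 * v₀ (2 * t) + 2 * v₀ (-(2 * t))) * ψ (t, 0))
      = (∫ u, auxF1 v₀ ψ u) + ∫ u, auxF2 v₀ ψ u := by
    have e1 : Set.EqOn (fun t => (2 * v₀ (2 * t) + 2 * v₀ (-(2 * t))) * ψ (t, 0))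
        (fun t => 2 * auxF1 v₀ ψ (2 * t) + 2 * auxF2 v₀ ψ ((-2) * t)) (uIcc 0 T) := by
      intro t _
      simp only [auxF1, auxF2]
      have ea : 2 * t / 2 = t := by ring
      have eb : -((-2) * t / 2) = t := by ring
      rw [ea, eb]
      have ec : (-2 : ℝ) * t = -(2 * t) := by ring
      rw [ec]
      ring
    have hF1c : Continuous (auxF1 v₀ ψ) := by
      show Continuous fun u => v₀ u * ψ (u / 2, 0)
      exact hc.mul (hψc.comp ((continuous_id.div_const 2).prodMk continuous_const))
    have hF2c : Continuous (auxF2 v₀ ψ) := by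
      show Continuous fun u => v₀ u * ψ (-(u / 2), 0)
      exact hc.mul (hψc.comp (((continuous_id.div_const 2).neg).prodMk continuous_const))
    have i1 : IntervalIntegrable (fun t => 2 * auxF1 v₀ ψ (2 * t)) volume 0 T :=
      (continuous_const.mul (hF1c.comp (continuous_const.mul continuous_id))).intervalIntegrable _ _
    have i2 : IntervalIntegrable (fun t => 2 * auxF2 v₀ ψ ((-2) * t)) volume 0 T :=
      (continuous_const.mul (hF2c.comp (continuous_const.mul continuous_id))).intervalIntegrable _ _
    calc (∫ t in (0 : ℝ)..T, (2 * v₀ (2 * t) + 2 * v₀ (-(2 * t))) * ψ (t, 0))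
        = ∫ t in (0 : ℝ)..T, (2 * auxF1 v₀ ψ (2 * t) + 2 * auxF2 v₀ ψ ((-2) * t)) :=
          intervalIntegral.integral_congr e1
      _ = (∫ t in (0 : ℝ)..T, 2 * auxF1 v₀ ψ (2 * t))
            + ∫ t in (0 : ℝ)..T, 2 * auxF2 v₀ ψ ((-2) * t) :=
          intervalIntegral.integral_add i1 i2
      _ = 2 * (∫ t in (0 : ℝ)..T, auxF1 v₀ ψ (2 * t))
            + 2 * ∫ t in (0 : ℝ)..T, auxF2 v₀ ψ ((-2) * t) := by
          rw [intervalIntegral.integral_const_mul, intervalIntegral.integral_const_mul]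
      _ = 2 * ((2 : ℝ)⁻¹ • ∫ u in (2 * (0 : ℝ))..(2 * T), auxF1 v₀ ψ u)
            + 2 * (((-2 : ℝ))⁻¹ • ∫ u in ((-2) * (0 : ℝ))..((-2) * T), auxF2 v₀ ψ u) := by
          rw [intervalIntegral.integral_comp_mul_left (auxF1 v₀ ψ) (two_ne_zero),
            intervalIntegral.integral_comp_mul_left (auxF2 v₀ ψ) (by norm_num : ((-2) : ℝ) ≠ 0)]
      _ = 2 * ((2 : ℝ)⁻¹ * ∫ u in (0 : ℝ)..(2 * T), auxF1 v₀ ψ u)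
            + 2 * (((-2 : ℝ))⁻¹ * ∫ u in (0 : ℝ)..((-2) * T), auxF2 v₀ ψ u) := by
          norm_num
      _ = (∫ u, auxF1 v₀ ψ u) + ∫ u, auxF2 v₀ ψ u := by
          rw [hA1, hA2]
          ring
  -- second term via integration by parts
  have hcu' : Continuous fun t : ℝ => 2 * v₀ (2 * t) + 2 * v₀ (-(2 * t)) :=
    (continuous_const.mul (hc.comp (continuous_const.mul continuous_id))).add
      (continuous_const.mul (hc.comp ((continuous_const.mul continuous_id).neg)))
  have hcv' : Continuous fun t : ℝ => D (t, 0) (1, 0) :=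
    (hDapp (1, 0)).comp (continuous_id.prodMk continuous_const)
  have hsecond : (∫ t in (0 : ℝ)..T, Ψ t * D (t, 0) (1, 0))
      = -((∫ u, auxF1 v₀ ψ u) + ∫ u, auxF2 v₀ ψ u) := by
    have hparts := intervalIntegral.integral_mul_deriv_eq_deriv_mul
      (a := (0 : ℝ)) (b := T) (u := Ψ) (u' := fun t => 2 * v₀ (2 * t) + 2 * v₀ (-(2 * t)))
      (v := fun t => ψ (t, 0)) (v' := fun t => D (t, 0) (1, 0))
      (fun x _ => hΨderiv x) (fun x _ => hA' 0 x)
      (hcu'.intervalIntegrable _ _) (hcv'.intervalIntegrable _ _)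
    have h2 : Ψ T * ψ (T, 0) - Ψ 0 * ψ ((0 : ℝ), (0 : ℝ))
        - (∫ x in (0 : ℝ)..T, (2 * v₀ (2 * x) + 2 * v₀ (-(2 * x))) * ψ (x, 0))
        = -((∫ u, auxF1 v₀ ψ u) + ∫ u, auxF2 v₀ ψ u) := by
      rw [hψT, hψ0, mul_zero, mul_zero, sub_zero, zero_sub, hsum]
    exact hparts.trans h2
  -- conclusion
  simp only [hA, hB]
  rw [hfirst, hsecond]
  ring
end

section
/- Let T > 0 and v₀ ∈ L¹(ℝ) ∩ L²(ℝ). Define ṽ(t,x) = v₀(x - 2t) for x < 0, ṽ(t,x) = v₀(x + 2t) for x > 0, and Ψ(t) = ∫_{-2t}^{2t} v₀(x) dx. There exists an absolute constant c > 0 such that for every smooth compactly supported test function ψ : (0,T) × ℝ → ℝ, | ∫₀^T ∫_ℝ ṽ(t,x)·ψ(t,x) dx dt + ∫₀^T Ψ(t)·ψ(t,0) dt | ≤ c·( ‖v₀‖_{L¹(ℝ)} + ‖v₀‖_{L²(ℝ)} )·∫₀^T ( ∫_ℝ ( ψ(t,x)² + (∂_x ψ(t,x))² ) dx )^{1/2}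 dt. -/
open MeasureTheory

lemma cs7 {f g : ℝ → ℝ} (hf : MemLp f 2 (volume : Measure ℝ))
    (hg : MemLp g 2 (volume : Measure ℝ)) :
    |∫ x : ℝ, f x * g x| ≤ Real.sqrt (∫ x : ℝ, f x ^ 2) * Real.sqrt (∫ x : ℝ, g x ^ 2) := by
  have hpq : (2:ℝ).HolderConjugate 2 := ⟨by norm_num, by norm_num, by norm_num⟩
  have h2 : ENNReal.ofReal (2:ℝ) = 2 := by norm_num
  have key := integral_mul_norm_le_Lp_mul_Lq (μ := (volume : Measure ℝ)) hpq
    (h2 ▸ hf) (h2 ▸ hg)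
  have epow : ∀ h : ℝ → ℝ, (∫ x : ℝ, ‖h x‖ ^ (2:ℝ)) = ∫ x : ℝ, h x ^ 2 := by
    intro h
    refine integral_congr_ae (Filter.Eventually.of_forall fun x => ?_)
    show ‖h x‖ ^ (2:ℝ) = h x ^ 2
    rw [show (2:ℝ) = ((2:ℕ):ℝ) by norm_num, Real.rpow_natCast, Real.norm_eq_abs, sq_abs]
  calc |∫ x : ℝ, f x * g x| ≤ ∫ x : ℝ, ‖f x * g x‖ := by
        rw [← Real.norm_eq_abs]; exact norm_integral_le_integral_norm _
    _ = ∫ x : ℝ, ‖f x‖ * ‖g x‖ := by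
        refine integral_congr_ae (Filter.Eventually.of_forall fun x => ?_); exact norm_mul _ _
    _ ≤ (∫ x : ℝ, ‖f x‖ ^ (2:ℝ)) ^ (1/2:ℝ) * (∫ x : ℝ, ‖g x‖ ^ (2:ℝ)) ^ (1/2:ℝ) := key
    _ = Real.sqrt (∫ x : ℝ, f x ^ 2) * Real.sqrt (∫ x : ℝ, g x ^ 2) := by
        rw [epow f, epow g, ← Real.sqrt_eq_rpow, ← Real.sqrt_eq_rpow]

lemma sob7 {f : ℝ → ℝ} (hf : ContDiff ℝ (⊤ : ℕ∞) f) (hs : HasCompactSupport f) :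
    f 0 ^ 2 ≤ ∫ x : ℝ, (f x ^ 2 + deriv f x ^ 2) := by
  have hd : Differentiable ℝ f := hf.differentiable (by simp)
  have hfc : Continuous f := hf.continuous
  have hdc : Continuous (deriv f) := hf.continuous_deriv (mod_cast le_top)
  have hds : HasCompactSupport (deriv f) := hs.deriv
  have hsq : HasCompactSupport (fun x => f x ^ 2) :=
    hs.comp_left (g := fun y : ℝ => y ^ 2) (by simp)
  have hisq : Integrable (fun x => f x ^ 2) :=
    (hfc.pow 2).integrable_of_hasCompactSupport hsq
  have hisq' : Integrable (fun x => deriv f x ^ 2) :=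
    (hdc.fun_pow 2).integrable_of_hasCompactSupport (hds.comp_left (g := fun y : ℝ => y ^ 2) (by simp))
  have hisum : Integrable (fun x => f x ^ 2 + deriv f x ^ 2) := hisq.add hisq'
  -- derivative of f^2
  have hg : ∀ x : ℝ, HasDerivAt (fun y => f y ^ 2) (2 * f x * deriv f x) x := by
    intro x
    have := ((hd x).hasDerivAt).fun_pow 2
    simpa [pow_one] using this
  -- integrability of 2 f f' on Ioi 0
  have hF' : Integrable (fun x => 2 * f x * deriv f x) :=
    ((continuous_const.mul hfc).mul hdc).integrable_of_hasCompactSupport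
      (by exact (hs.mul_left).mul_right)
  -- tendsto of f^2 at top
  obtain ⟨R, hR⟩ := hsq.isBounded.subset_closedBall 0
  have hev : ∀ᶠ x in Filter.atTop, (fun y => f y ^ 2) x = 0 := by
    refine Filter.eventually_atTop.2 ⟨R + 1, fun x hx => ?_⟩
    have hx0 : x ∉ tsupport (fun y => f y ^ 2) := by
      intro hmem
      have h1 := hR hmem
      rw [Metric.mem_closedBall, Real.dist_eq, sub_zero] at h1
      have : x ≤ R := le_trans (le_abs_self x) h1
      linarith
    exact image_eq_zero_of_notMem_tsupport (f := fun y => f y ^ 2) hx0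
  have htend : Filter.Tendsto (fun y => f y ^ 2) Filter.atTop (nhds 0) :=
    (Filter.tendsto_congr' hev).2 tendsto_const_nhds
  have key : ∫ x in Set.Ioi (0:ℝ), 2 * f x * deriv f x = 0 - f 0 ^ 2 :=
    integral_Ioi_of_hasDerivAt_of_tendsto
      ((hfc.pow 2).continuousWithinAt) (fun x _ => hg x) hF'.integrableOn htend
  have step : f 0 ^ 2 = ∫ x in Set.Ioi (0:ℝ), -(2 * f x * deriv f x) := by
    rw [integral_neg, key]; ring
  rw [step]
  calc ∫ x in Set.Ioi (0:ℝ), -(2 * f x * deriv f x)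
      ≤ ∫ x in Set.Ioi (0:ℝ), (f x ^ 2 + deriv f x ^ 2) := by
        refine setIntegral_mono (hF'.neg.integrableOn) (hisum.integrableOn) fun x => ?_
        nlinarith [sq_nonneg (f x + deriv f x)]
    _ ≤ ∫ x : ℝ, (f x ^ 2 + deriv f x ^ 2) :=
        setIntegral_le_integral hisum
          (Filter.Eventually.of_forall fun x => by positivity)

lemma deriv_slice7 {ψ : ℝ × ℝ → ℝ} (hψ : ContDiff ℝ (⊤ : ℕ∞) ψ) (t x : ℝ) :
    deriv (fun y => ψ (t, y)) x = fderiv ℝ ψ (t, x) (0, 1) := by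
  have h2 := (hψ.differentiable (by simp) (t, x)).hasFDerivAt
  have h3 : HasDerivAt (fun y : ℝ => ((t, y) : ℝ × ℝ)) ((0 : ℝ), (1 : ℝ)) x :=
    (hasDerivAt_const x t).prodMk (hasDerivAt_id x)
  exact (h2.comp_hasDerivAt x h3).deriv

lemma contS7 {ψ : ℝ × ℝ → ℝ} (hψ : ContDiff ℝ (⊤ : ℕ∞) ψ) (hψc : HasCompactSupport ψ) :
    Continuous (fun t : ℝ => ∫ x : ℝ,
      ((ψ (t, x)) ^ 2 + (deriv (fun y => ψ (t, y)) x) ^ 2)) := by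
  set H : ℝ × ℝ → ℝ := fun p => ψ p ^ 2 + (fderiv ℝ ψ p (0, 1)) ^ 2 with hH
  have hHc : Continuous H := by
    have hD : Continuous (fun p : ℝ × ℝ => fderiv ℝ ψ p ((0 : ℝ), (1 : ℝ))) :=
      (hψ.continuous_fderiv (by simp)).clm_apply continuous_const
    exact (hψ.continuous.pow 2).add (hD.pow 2)
  have hHs : HasCompactSupport H := by
    refine HasCompactSupport.intro hψc fun p hp => ?_
    have h0 : ψ p = 0 := image_eq_zero_of_notMem_tsupport hp
    have h1 : fderiv ℝ ψ p = 0 := by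
      have hev : ψ =ᶠ[nhds p] (fun _ => (0 : ℝ)) := by
        have : IsOpen (tsupport ψ)ᶜ := (isClosed_tsupport ψ).isOpen_compl
        filter_upwards [this.mem_nhds hp] with q hq
        exact image_eq_zero_of_notMem_tsupport hq
      rw [hev.fderiv_eq, fderiv_fun_const]; rfl
    simp [hH, h0, h1]
  obtain ⟨M, hM⟩ := hHc.bounded_above_of_compact_support hHs
  obtain ⟨R, hR⟩ := hHs.isBounded.subset_closedBall 0
  have heq : (fun t : ℝ => ∫ x : ℝ, ((ψ (t, x)) ^ 2 + (deriv (fun y => ψ (t, y)) x) ^ 2))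
      = fun t : ℝ => ∫ x : ℝ, H (t, x) := by
    funext t
    refine integral_congr_ae (Filter.Eventually.of_forall fun x => ?_)
    show ψ (t, x) ^ 2 + deriv (fun y => ψ (t, y)) x ^ 2 = H (t, x)
    rw [deriv_slice7 hψ t x]
  rw [heq]
  refine continuous_of_dominated (bound := Set.indicator (Set.Icc (-R) R) (fun _ => M))
    (fun t => (hHc.comp (continuous_const.prodMk continuous_id)).aestronglyMeasurable)
    (fun t => Filter.Eventually.of_forall fun x => ?_)
    ?_
    (Filter.Eventually.of_forall fun x => hHc.comp (continuous_id.prodMk continuous_const))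
  · -- bound
    by_cases hx : |x| ≤ R
    · calc ‖H (t, x)‖ ≤ M := hM (t, x)
        _ = Set.indicator (Set.Icc (-R) R) (fun _ => M) x := by
            rw [Set.indicator_of_mem]
            rw [Set.mem_Icc]; exact abs_le.1 hx
    · have hmem : (t, x) ∉ tsupport H := by
        intro hmem
        have := hR hmem
        rw [Metric.mem_closedBall, dist_zero_right, Prod.norm_def] at this
        have : ‖x‖ ≤ R := le_trans (le_max_right _ _) this
        exact hx (by rwa [Real.norm_eq_abs] at this)
      have h0 : H (t, x) = 0 := image_eq_zero_of_notMem_tsupport hmem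
      rw [h0, Set.indicator_of_notMem (by rwa [Set.mem_Icc, ← abs_le])]
      simp
  · rw [integrable_indicator_iff measurableSet_Icc]
    exact integrableOn_const measure_Icc_lt_top.ne

/-- the `L^∞(0,T; H^{-1})` bound, in duality form, for the measure solution
`v = ṽ + Ψ(t) δ_Σ` of the linearized transport equation:
`|⟨v, ψ⟩| ≤ c (‖v₀‖_{L¹} + ‖v₀‖_{L²}) ‖ψ‖_{L¹(0,T;H¹)}` with an absolute constant `c`. -/
theorem stmt_7 :
    ∃ c : ℝ, 0 < c ∧
      ∀ T : ℝ, 0 < T → ∀ v₀ : ℝ → ℝ, Integrable v₀ → MemLp v₀ 2 →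
        ∀ ψ : ℝ × ℝ → ℝ, ContDiff ℝ (⊤ : ℕ∞) ψ → HasCompactSupport ψ →
          tsupport ψ ⊆ Set.Ioo (0 : ℝ) T ×ˢ (Set.univ : Set ℝ) →
          |(∫ t in (0 : ℝ)..T, ∫ x : ℝ,
              (if x < 0 then v₀ (x - 2 * t) else v₀ (x + 2 * t)) * ψ (t, x))
            + ∫ t in (0 : ℝ)..T, (∫ y in (-(2 * t))..(2 * t), v₀ y) * ψ (t, 0)|
          ≤ c * ((∫ x : ℝ, |v₀ x|) + Real.sqrt (∫ x : ℝ, (v₀ x) ^ 2)) *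
              ∫ t in (0 : ℝ)..T,
                Real.sqrt (∫ x : ℝ, ((ψ (t, x)) ^ 2 + (deriv (fun y => ψ (t, y)) x) ^ 2)) := by
  refine ⟨2, by norm_num, ?_⟩
  intro T hT v₀ hv1 hv2 ψ hψ hψc hψs
  have hN1 : (0:ℝ) ≤ ∫ x : ℝ, |v₀ x| := integral_nonneg fun x => abs_nonneg _
  set N1 : ℝ := ∫ x : ℝ, |v₀ x| with hN1def
  set N2 : ℝ := Real.sqrt (∫ x : ℝ, (v₀ x) ^ 2) with hN2def
  have hN2 : (0:ℝ) ≤ N2 := Real.sqrt_nonneg _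
  -- slices of ψ
  have emb : ∀ t : ℝ, Isometry (fun x : ℝ => ((t, x) : ℝ × ℝ)) := fun t =>
    Isometry.of_dist_eq fun a b => by
      simp [Prod.dist_eq, dist_self, max_eq_right dist_nonneg]
  have hfC : ∀ t : ℝ, ContDiff ℝ (⊤ : ℕ∞) (fun x => ψ (t, x)) := fun t =>
    hψ.comp (contDiff_const.prodMk contDiff_id)
  have hfS : ∀ t : ℝ, HasCompactSupport (fun x => ψ (t, x)) := fun t =>
    hψc.comp_isClosedEmbedding (emb t).isClosedEmbedding
  set G : ℝ → ℝ := fun t =>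
    Real.sqrt (∫ x : ℝ, ((ψ (t, x)) ^ 2 + (deriv (fun y => ψ (t, y)) x) ^ 2)) with hGdef
  have hfL2 : ∀ t : ℝ, MemLp (fun x => ψ (t, x)) 2 (volume : Measure ℝ) := fun t =>
    ((hfC t).continuous).memLp_of_hasCompactSupport (hfS t)
  have hintf2 : ∀ t : ℝ, Integrable (fun x => ψ (t, x) ^ 2) := fun t => (hfL2 t).integrable_sq
  have hintd2 : ∀ t : ℝ, Integrable (fun x => deriv (fun y => ψ (t, y)) x ^ 2) := fun t =>
    ((((hfC t).continuous_deriv (mod_cast le_top)).fun_pow 2).integrable_of_hasCompactSupport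
      (((hfS t).deriv).comp_left (g := fun y : ℝ => y ^ 2) (by simp)))
  have hintsum : ∀ t : ℝ,
      Integrable (fun x => ψ (t, x) ^ 2 + deriv (fun y => ψ (t, y)) x ^ 2) :=
    fun t => (hintf2 t).add (hintd2 t)
  have hsobt : ∀ t : ℝ, |ψ (t, 0)| ≤ G t := by
    intro t
    have h0 := sob7 (hfC t) (hfS t)
    rw [← Real.sqrt_sq_eq_abs]
    exact Real.sqrt_le_sqrt h0
  have hL2G : ∀ t : ℝ, Real.sqrt (∫ x : ℝ, ψ (t, x) ^ 2) ≤ G t := by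
    intro t
    refine Real.sqrt_le_sqrt (integral_mono (hintf2 t) (hintsum t) fun x => ?_)
    nlinarith [sq_nonneg (deriv (fun y => ψ (t, y)) x)]
  -- the ṽ part
  have hwbound : ∀ t : ℝ,
      |∫ x : ℝ, (if x < 0 then v₀ (x - 2 * t) else v₀ (x + 2 * t)) * ψ (t, x)|
        ≤ (Real.sqrt 2 * N2) * G t := by
    intro t
    set a : ℝ → ℝ := fun x => v₀ (x + -(2 * t)) with ha
    set b : ℝ → ℝ := fun x => v₀ (x + 2 * t) with hb
    have hma : MemLp a 2 (volume : Measure ℝ) :=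
      hv2.comp_measurePreserving (measurePreserving_add_right volume (-(2 * t)))
    have hmb : MemLp b 2 (volume : Measure ℝ) :=
      hv2.comp_measurePreserving (measurePreserving_add_right volume (2 * t))
    set w : ℝ → ℝ := fun x => if x < 0 then v₀ (x - 2 * t) else v₀ (x + 2 * t) with hwdef
    have hw_eq : w = fun x =>
        Set.indicator (Set.Iio 0) a x + Set.indicator (Set.Ici 0) b x := by
      funext x
      by_cases hx : x < 0
      · rw [hwdef]
        simp only [hx, if_true]
        rw [Set.indicator_of_mem (Set.mem_Iio.2 hx),
          Set.indicator_of_notMem (by simpa using not_le.2 hx), ha]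
        simp [sub_eq_add_neg]
      · rw [hwdef]
        simp only [hx, if_false]
        rw [Set.indicator_of_notMem (by simpa using hx),
          Set.indicator_of_mem (Set.mem_Ici.2 (not_lt.1 hx)), hb]
        simp
    have hwm : MemLp w 2 (volume : Measure ℝ) := by
      rw [hw_eq]
      exact (hma.indicator measurableSet_Iio).add (hmb.indicator measurableSet_Ici)
    have ha2 : Integrable (fun x => a x ^ 2) := hma.integrable_sq
    have hb2 : Integrable (fun x => b x ^ 2) := hmb.integrable_sq
    have hintA : ∫ x : ℝ, a x ^ 2 = ∫ x : ℝ, (v₀ x) ^ 2 :=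
      integral_add_right_eq_self (fun y => v₀ y ^ 2) (-(2 * t))
    have hintB : ∫ x : ℝ, b x ^ 2 = ∫ x : ℝ, (v₀ x) ^ 2 :=
      integral_add_right_eq_self (fun y => v₀ y ^ 2) (2 * t)
    have hw2 : ∫ x : ℝ, w x ^ 2 ≤ 2 * ∫ x : ℝ, (v₀ x) ^ 2 := by
      have heq : (fun x => w x ^ 2)
          = fun x => Set.indicator (Set.Iio 0) (fun y => a y ^ 2) x
              + Set.indicator (Set.Ici 0) (fun y => b y ^ 2) x := by
        funext x
        by_cases hx : x < 0
        · rw [hwdef]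
          simp only [hx, if_true]
          rw [Set.indicator_of_mem (Set.mem_Iio.2 hx),
            Set.indicator_of_notMem (by simpa using not_le.2 hx), ha]
          simp [sub_eq_add_neg]
        · rw [hwdef]
          simp only [hx, if_false]
          rw [Set.indicator_of_notMem (by simpa using hx),
            Set.indicator_of_mem (Set.mem_Ici.2 (not_lt.1 hx)), hb]
          simp
      calc ∫ x : ℝ, w x ^ 2
          = (∫ x : ℝ, Set.indicator (Set.Iio 0) (fun y => a y ^ 2) x)
            + ∫ x : ℝ, Set.indicator (Set.Ici 0) (fun y => b y ^ 2) x := by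
            rw [heq]
            exact integral_add (ha2.indicator measurableSet_Iio)
              (hb2.indicator measurableSet_Ici)
        _ = (∫ x in Set.Iio (0:ℝ), a x ^ 2) + ∫ x in Set.Ici (0:ℝ), b x ^ 2 := by
            rw [integral_indicator measurableSet_Iio, integral_indicator measurableSet_Ici]
        _ ≤ (∫ x : ℝ, a x ^ 2) + ∫ x : ℝ, b x ^ 2 :=
            add_le_add
              (setIntegral_le_integral ha2 (Filter.Eventually.of_forall fun x => sq_nonneg _))
              (setIntegral_le_integral hb2 (Filter.Eventually.of_forall fun x => sq_nonneg _))
        _ = 2 * ∫ x : ℝ, (v₀ x) ^ 2 := by rw [hintA, hintB]; ring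
    have hsw : Real.sqrt (∫ x : ℝ, w x ^ 2) ≤ Real.sqrt 2 * N2 := by
      have h1 := Real.sqrt_le_sqrt hw2
      rwa [Real.sqrt_mul (by norm_num : (0:ℝ) ≤ 2) _, ← hN2def] at h1
    have hcs := cs7 hwm (hfL2 t)
    show |∫ x : ℝ, w x * ψ (t, x)| ≤ (Real.sqrt 2 * N2) * G t
    refine hcs.trans ?_
    exact mul_le_mul hsw (hL2G t) (Real.sqrt_nonneg _)
      (by positivity)
  -- the Ψ part
  have hPsi : ∀ t : ℝ, 0 ≤ t → |∫ y in (-(2 * t))..(2 * t), v₀ y| ≤ N1 := by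
    intro t ht
    have h1 : -(2 * t) ≤ 2 * t := by linarith
    calc |∫ y in (-(2 * t))..(2 * t), v₀ y| ≤ ∫ y in (-(2 * t))..(2 * t), |v₀ y| :=
          intervalIntegral.abs_integral_le_integral_abs h1
      _ = ∫ y in Set.Ioc (-(2 * t)) (2 * t), |v₀ y| := intervalIntegral.integral_of_le h1
      _ ≤ ∫ y : ℝ, |v₀ y| :=
          setIntegral_le_integral hv1.abs (Filter.Eventually.of_forall fun x => abs_nonneg _)
  -- continuity and integrability of G
  have hGcont : Continuous G := Real.continuous_sqrt.comp (contS7 hψ hψc)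
  have hGint : IntegrableOn G (Set.Ioc 0 T) := hGcont.integrableOn_Ioc
  have hI : (0:ℝ) ≤ ∫ t in Set.Ioc (0:ℝ) T, G t :=
    setIntegral_nonneg measurableSet_Ioc fun t _ => Real.sqrt_nonneg _
  have hTle : (0:ℝ) ≤ T := hT.le
  have hA : |∫ t in (0:ℝ)..T, ∫ x : ℝ,
        (if x < 0 then v₀ (x - 2 * t) else v₀ (x + 2 * t)) * ψ (t, x)|
      ≤ (Real.sqrt 2 * N2) * ∫ t in Set.Ioc (0:ℝ) T, G t := by
    refine (intervalIntegral.abs_integral_le_integral_abs hTle).trans ?_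
    rw [intervalIntegral.integral_of_le hTle]
    refine le_trans (integral_mono_of_nonneg
      (ae_of_all _ fun t => abs_nonneg _)
      (hGint.const_mul (Real.sqrt 2 * N2))
      (ae_of_all _ fun t => hwbound t)) ?_
    rw [integral_const_mul]
  have hB : |∫ t in (0:ℝ)..T, (∫ y in (-(2 * t))..(2 * t), v₀ y) * ψ (t, 0)|
      ≤ N1 * ∫ t in Set.Ioc (0:ℝ) T, G t := by
    refine (intervalIntegral.abs_integral_le_integral_abs hTle).trans ?_
    rw [intervalIntegral.integral_of_le hTle]
    have hbd : (fun t => |(∫ y in (-(2 * t))..(2 * t), v₀ y) * ψ (t, 0)|)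
        ≤ᵐ[volume.restrict (Set.Ioc (0:ℝ) T)] fun t => N1 * G t := by
      filter_upwards [ae_restrict_mem measurableSet_Ioc] with t ht
      rw [abs_mul]
      exact mul_le_mul (hPsi t ht.1.le) (hsobt t) (abs_nonneg _) hN1
    refine le_trans (integral_mono_of_nonneg
      (ae_of_all _ fun t => abs_nonneg _) (hGint.const_mul N1) hbd) ?_
    rw [integral_const_mul]
  have hsqrt2 : Real.sqrt 2 ≤ 2 := by
    nlinarith [Real.sq_sqrt (show (0:ℝ) ≤ 2 by norm_num), Real.sqrt_nonneg 2]
  calc |(∫ t in (0:ℝ)..T, ∫ x : ℝ,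
          (if x < 0 then v₀ (x - 2 * t) else v₀ (x + 2 * t)) * ψ (t, x))
        + ∫ t in (0:ℝ)..T, (∫ y in (-(2 * t))..(2 * t), v₀ y) * ψ (t, 0)|
      ≤ |∫ t in (0:ℝ)..T, ∫ x : ℝ,
          (if x < 0 then v₀ (x - 2 * t) else v₀ (x + 2 * t)) * ψ (t, x)|
        + |∫ t in (0:ℝ)..T, (∫ y in (-(2 * t))..(2 * t), v₀ y) * ψ (t, 0)| := abs_add_le _ _
    _ ≤ (Real.sqrt 2 * N2) * (∫ t in Set.Ioc (0:ℝ) T, G t)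
        + N1 * ∫ t in Set.Ioc (0:ℝ) T, G t := add_le_add hA hB
    _ ≤ 2 * (N1 + N2) * ∫ t in Set.Ioc (0:ℝ) T, G t := by
        nlinarith [mul_nonneg hN1 hI, mul_nonneg hN2 hI, mul_nonneg hN2 hI]
    _ = 2 * (N1 + N2) * ∫ t in (0:ℝ)..T, G t := by
        rw [intervalIntegral.integral_of_le hTle]
end

section
/- Let φ : ℝ → ℝ be continuously differentiable and bounded, with φ(0) = 0, φ(x) ≥ 0 for x ≤ 0, and φ(x) ≤ 0 for x ≥ 0. Let v : ℝ → ℝ be continuously differentiable with compact support. Then ∫_ℝ (φ·v)'(x) · v(x) · |φ(x)| dx = 0. -/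
open MeasureTheory

/-- the cancellation identity `∫ (φ v)' · v · |φ| dx = 0` for a bounded `C¹`
function `φ` with `φ(0) = 0`, `φ ≥ 0` on `(-∞,0]`, `φ ≤ 0` on `[0,∞)`, and `v` a `C¹`
function with compact support. -/
theorem stmt_15 (φ : ℝ → ℝ) (hφ1 : ContDiff ℝ 1 φ) (hφbd : ∃ M : ℝ, ∀ x : ℝ, |φ x| ≤ M)
    (hφ0 : φ 0 = 0) (hφL : ∀ x : ℝ, x ≤ 0 → 0 ≤ φ x) (hφR : ∀ x : ℝ, 0 ≤ x → φ x ≤ 0)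
    (v : ℝ → ℝ) (hv : ContDiff ℝ 1 v) (hvs : HasCompactSupport v) :
    (∫ x : ℝ, deriv (fun y => φ y * v y) x * v x * |φ x|) = 0 := by
  set w : ℝ → ℝ := fun y => φ y * v y with hw_def
  have hw : ContDiff ℝ 1 w := hφ1.mul hv
  have hwd : Differentiable ℝ w := hw.differentiable one_ne_zero
  have hwc : Continuous w := hw.continuous
  have hw'c : Continuous (deriv w) := hw.continuous_deriv le_rfl
  have hvc : Continuous v := hv.continuous
  have hφc : Continuous φ := hφ1.continuous
  set f : ℝ → ℝ := fun x => deriv w x * v x * |φ x| with hf_def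
  have hfc : Continuous f := (hw'c.mul hvc).mul hφc.abs
  obtain ⟨r, hr⟩ := hvs.isBounded.subset_closedBall 0
  set R : ℝ := |r| + 1 with hR_def
  have hrR : |r| < R := by simp [hR_def]
  have hR0 : 0 < R := lt_of_le_of_lt (abs_nonneg r) hrR
  have hv0 : ∀ x : ℝ, |r| < |x| → v x = 0 := by
    intro x hx
    apply image_eq_zero_of_notMem_tsupport
    intro hxt
    have := hr hxt
    rw [Metric.mem_closedBall, Real.dist_eq, sub_zero] at this
    have : |x| ≤ |r| := le_trans this (le_abs_self r)
    linarith
  have hvR : v R = 0 := hv0 R (by rwa [abs_of_pos hR0])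
  have hvmR : v (-R) = 0 := hv0 (-R) (by rwa [abs_neg, abs_of_pos hR0])
  have hw0 : w 0 = 0 := by simp [hw_def, hφ0]
  have hwR : w R = 0 := by simp [hw_def, hvR]
  have hwmR : w (-R) = 0 := by simp [hw_def, hvmR]
  -- the antiderivatives
  have hF : ∀ x : ℝ, HasDerivAt (fun y => w y * w y / 2) (deriv w x * w x) x := by
    intro x
    have h1 := (((hwd x).hasDerivAt).mul ((hwd x).hasDerivAt)).div_const 2
    refine h1.congr_deriv ?_
    ring
  have hG : ∀ x : ℝ, HasDerivAt (fun y => -(w y * w y / 2)) (-(deriv w x * w x)) x :=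
    fun x => (hF x).neg
  -- support of f
  have hsupp : Function.support f ⊆ Set.Ioc (-R) R := by
    intro x hx
    have hxv : v x ≠ 0 := by
      intro h
      apply hx
      simp [hf_def, h]
    have hxr : |x| ≤ |r| := by
      by_contra h
      exact hxv (hv0 x (lt_of_not_ge h))
    have h1 : -R < x := by
      have := neg_abs_le x
      have := abs_le.mp hxr
      linarith
    have h2 : x ≤ R := by
      have := abs_le.mp hxr
      linarith [le_abs_self x]
    exact ⟨h1, h2⟩
  have hmain : (∫ x : ℝ, deriv (fun y => φ y * v y) x * v x * |φ x|) = ∫ x : ℝ, f x := rfl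
  rw [hmain, ← intervalIntegral.integral_eq_integral_of_support_subset hsupp]
  have hi1 : IntervalIntegrable f volume (-R) 0 := hfc.intervalIntegrable _ _
  have hi2 : IntervalIntegrable f volume 0 R := hfc.intervalIntegrable _ _
  rw [← intervalIntegral.integral_add_adjacent_intervals hi1 hi2]
  have hL : (∫ x in (-R)..0, f x) = ∫ x in (-R)..0, deriv w x * w x := by
    apply intervalIntegral.integral_congr
    intro x hx
    rw [Set.uIcc_of_le (by linarith)] at hx
    have h1 : |φ x| = φ x := abs_of_nonneg (hφL x hx.2)
    simp only [hf_def, hw_def, h1]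
    ring
  have hR' : (∫ x in (0:ℝ)..R, f x) = ∫ x in (0:ℝ)..R, -(deriv w x * w x) := by
    apply intervalIntegral.integral_congr
    intro x hx
    rw [Set.uIcc_of_le (by linarith)] at hx
    have h1 : |φ x| = -φ x := abs_of_nonpos (hφR x hx.1)
    simp only [hf_def, hw_def, h1]
    ring
  have hLval : (∫ x in (-R)..0, deriv w x * w x) = w 0 * w 0 / 2 - w (-R) * w (-R) / 2 :=
    intervalIntegral.integral_eq_sub_of_hasDerivAt (fun x _ => hF x)
      ((hw'c.mul hwc).intervalIntegrable _ _)
  have hRval : (∫ x in (0:ℝ)..R, -(deriv w x * w x))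
      = -(w R * w R / 2) - -(w 0 * w 0 / 2) :=
    intervalIntegral.integral_eq_sub_of_hasDerivAt (fun x _ => hG x)
      (((hw'c.mul hwc).neg).intervalIntegrable _ _)
  rw [hL, hR', hLval, hRval, hw0, hwR, hwmR]
  ring
end
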